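/- arXiv:2110.01184 — 11 statements merged into one kernel-verified Lean document; each statement's English description precedes it below -/
import Mathlib

section
/- Every graph on n vertices with no triangle has at most n²/4 edges. -/
/-!
Mantel's theorem is the case `r = 2` of Turán's theorem: a triangle-free graph on `n` vertices
has at most as many edges as the complete bipartite graph `turanGraph n 2` with balanced parts,
which has `⌊n / 2⌋ * ⌈n / 2⌉ ≤ n² / 4` edges.
-/

open Finset

namespace SimpleGraph

variable {V : Type*} [Fintype V] {G : SimpleGraph V} [DecidableRel G.Adj] {r : ℕ}

theorem CliqueFree.card_edgeFinset_le_turanGraph (hr : 0 < r) (hG : G.CliqueFree (r + 1)) :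
    #G.edgeFinset ≤ #(turanGraph (Fintype.card V) r).edgeFinset := by
  obtain ⟨H, _, hH⟩ := exists_isTuranMaximal (V := V) hr
  calc #G.edgeFinset ≤ #H.edgeFinset := hH.2 hG
    _ = #(turanGraph (Fintype.card V) r).edgeFinset :=
      ((isTuranMaximal_iff_nonempty_iso_turanGraph hr).mp hH).some.card_edgeFinset_eq

theorem CliqueFree.mul_card_edgeFinset_le (hr : 0 < r) (hG : G.CliqueFree (r + 1)) :
    2 * r * #G.edgeFinset ≤ (r - 1) * Fintype.card V ^ 2 :=
  (Nat.mul_le_mul_left _ (hG.card_edgeFinset_le_turanGraph hr)).trans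
    mul_card_edgeFinset_turanGraph_le

end SimpleGraph

/-- Mantel's theorem: every triangle-free graph on `n` vertices has at most `n²/4` edges. -/
theorem mantel (n : ℕ) (G : SimpleGraph (Fin n)) [DecidableRel G.Adj]
    (hG : G.CliqueFree 3) :
    (G.edgeFinset.card : ℝ) ≤ (n : ℝ) ^ 2 / 4 := by
  have h := hG.mul_card_edgeFinset_le two_pos
  rw [Fintype.card_fin] at h
  rw [le_div_iff₀ four_pos]
  exact_mod_cast (by omega : G.edgeFinset.card * 4 ≤ n ^ 2)
end

section
/- Every n-vertex simple graph with at least ⌊n²/4⌋ + 1 edges contains at least ⌊n/4⌋ triangles. -/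
/-!
For every pair of vertices, `|N(u) ∩ N(v)| ≥ d(u) + d(v) - n`. Summing over ordered adjacent
pairs, which counts every triangle six times, gives `6t ≥ 2 ∑ d² - 2mn`, and Cauchy–Schwarz
`n ∑ d² ≥ 4m²` turns this into the Moon–Moser bound `3nt ≥ m (4m - n²)`. As soon as
`4m ≥ n² + 3` this forces `t ≥ m / n > n / 4`.
-/

open Finset

namespace Finset
variable {α : Type*} [DecidableEq α]

theorem card_filter_pairwise_ne_triple (s : Finset α) :
    #{p ∈ s ×ˢ s ×ˢ s | p.1 ≠ p.2.1 ∧ p.1 ≠ p.2.2 ∧ p.2.1 ≠ p.2.2} =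
      #s * (#s - 1) * (#s - 2) := by
  have hfiber : ∀ x ∈ s, #{q ∈ s ×ˢ s | x ≠ q.1 ∧ x ≠ q.2 ∧ q.1 ≠ q.2} = (#s - 1) * (#s - 2) := by
    intro x hx
    have : {q ∈ s ×ˢ s | x ≠ q.1 ∧ x ≠ q.2 ∧ q.1 ≠ q.2} = (s.erase x).offDiag := by
      ext q; simp only [mem_filter, mem_product, mem_offDiag, mem_erase]; tauto
    rw [this, offDiag_card, card_erase_of_mem hx, ← Nat.mul_sub_one, Nat.sub_sub]
  rw [card_filter, sum_product, mul_assoc, ← smul_eq_mul, ← sum_const, ← sum_congr rfl hfiber]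
  simp only [card_filter]

end Finset

namespace SimpleGraph

variable {V : Type*} [Fintype V] (G : SimpleGraph V) [DecidableRel G.Adj]

def orderedTriangles : Finset (V × V × V) :=
  {p | G.Adj p.1 p.2.1 ∧ G.Adj p.1 p.2.2 ∧ G.Adj p.2.1 p.2.2}

theorem card_orderedTriangles_le [DecidableEq V] :
    #G.orderedTriangles ≤ 6 * #(G.cliqueFinset 3) := by
  have hsub : G.orderedTriangles ⊆ (G.cliqueFinset 3).biUnion fun t =>
      {p ∈ t ×ˢ t ×ˢ t | p.1 ≠ p.2.1 ∧ p.1 ≠ p.2.2 ∧ p.2.1 ≠ p.2.2} := by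
    rintro ⟨u, v, w⟩ h
    simp only [orderedTriangles, mem_filter, mem_univ, true_and] at h
    obtain ⟨huv, huw, hvw⟩ := h
    simp only [mem_biUnion, mem_cliqueFinset_iff, mem_filter, mem_product]
    exact ⟨{u, v, w}, is3Clique_triple_iff.2 ⟨huv, huw, hvw⟩, ⟨by simp, by simp, by simp⟩,
      huv.ne, huw.ne, hvw.ne⟩
  calc #G.orderedTriangles ≤ ∑ t ∈ G.cliqueFinset 3,
        #{p ∈ t ×ˢ t ×ˢ t | p.1 ≠ p.2.1 ∧ p.1 ≠ p.2.2 ∧ p.2.1 ≠ p.2.2} :=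
        (card_le_card hsub).trans card_biUnion_le
    _ = 6 * #(G.cliqueFinset 3) := by
      rw [sum_congr rfl fun t ht => by
        rw [card_filter_pairwise_ne_triple, (mem_cliqueFinset_iff.1 ht).card_eq]]
      simp [mul_comm]

theorem card_orderedTriangles [DecidableEq V] : #G.orderedTriangles =
    ∑ u, ∑ v ∈ G.neighborFinset u, #(G.neighborFinset u ∩ G.neighborFinset v) := by
  rw [orderedTriangles, card_filter, Fintype.sum_prod_type]
  refine sum_congr rfl fun u _ => ?_
  rw [Fintype.sum_prod_type, neighborFinset_eq_filter, sum_filter]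
  refine sum_congr rfl fun v _ => ?_
  by_cases huv : G.Adj u v
  · rw [if_pos huv, ← card_filter]
    congr 1
    ext w
    simp [huv]
  · simp [huv]

theorem sum_sum_neighborFinset {M : Type*} [AddCommMonoid M] (f : V → M) :
    ∑ u, ∑ v ∈ G.neighborFinset u, f v = ∑ v, G.degree v • f v := by
  classical
  simp_rw [neighborFinset_eq_filter, sum_filter]
  rw [sum_comm]
  refine sum_congr rfl fun v _ => ?_
  simp_rw [G.adj_comm _ v, ← sum_filter, ← neighborFinset_eq_filter, sum_const,
    card_neighborFinset_eq_degree]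

theorem degree_add_degree_le [DecidableEq V] (u v : V) :
    G.degree u + G.degree v ≤ #(G.neighborFinset u ∩ G.neighborFinset v) + Fintype.card V := by
  rw [← card_neighborFinset_eq_degree, ← card_neighborFinset_eq_degree,
    ← card_inter_add_card_union]
  exact Nat.add_le_add_left (card_le_univ _) _

theorem two_mul_sum_sq_degree_le [DecidableEq V] :
    2 * ∑ v, G.degree v ^ 2 ≤ #G.orderedTriangles + 2 * #G.edgeFinset * Fintype.card V := by
  calc 2 * ∑ v, G.degree v ^ 2 = ∑ u, ∑ v ∈ G.neighborFinset u, (G.degree u + G.degree v) := by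
        simp only [sum_add_distrib, sum_const, sum_sum_neighborFinset, card_neighborFinset_eq_degree,
          smul_eq_mul, sq, two_mul]
    _ ≤ ∑ u, ∑ v ∈ G.neighborFinset u,
          (#(G.neighborFinset u ∩ G.neighborFinset v) + Fintype.card V) :=
        sum_le_sum fun u _ => sum_le_sum fun v _ => G.degree_add_degree_le u v
    _ = #G.orderedTriangles + 2 * #G.edgeFinset * Fintype.card V := by
        simp_rw [sum_add_distrib, card_orderedTriangles, sum_const, card_neighborFinset_eq_degree,
          smul_eq_mul, ← sum_mul, sum_degrees_eq_twice_card_edges]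

theorem four_mul_sq_card_edgeFinset_le_card_mul_sum_sq_degree :
    4 * #G.edgeFinset ^ 2 ≤ Fintype.card V * ∑ v, G.degree v ^ 2 := by
  have := sq_sum_le_card_mul_sum_sq (s := univ) (f := fun v => G.degree v)
  rwa [sum_degrees_eq_twice_card_edges, card_univ, mul_pow, show (2 : ℕ) ^ 2 = 4 by norm_num] at this

theorem four_mul_sq_card_edgeFinset_le [DecidableEq V] :
    4 * #G.edgeFinset ^ 2 ≤
      3 * Fintype.card V * #(G.cliqueFinset 3) + #G.edgeFinset * Fintype.card V ^ 2 := by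
  have h₁ := G.card_orderedTriangles_le
  have h₂ := G.two_mul_sum_sq_degree_le
  have h₃ := G.four_mul_sq_card_edgeFinset_le_card_mul_sum_sq_degree
  nlinarith

end SimpleGraph

/-- Rademacher's theorem: every `n`-vertex graph with at least `⌊n²/4⌋ + 1` edges
contains at least `⌊n/4⌋` triangles (3-element pairwise adjacent vertex sets). -/
theorem rademacher (n : ℕ) (G : SimpleGraph (Fin n)) [DecidableRel G.Adj]
    (hE : n ^ 2 / 4 + 1 ≤ G.edgeFinset.card) :
    n / 4 ≤ (G.cliqueFinset 3).card := by
  have hbound := G.four_mul_sq_card_edgeFinset_le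
  rw [Fintype.card_fin] at hbound
  have hsq : n ^ 2 % 4 ≤ 1 := by
    rcases Nat.even_or_odd n with ⟨k, rfl⟩ | ⟨k, rfl⟩ <;> ring_nf <;> omega
  have h4m : n ^ 2 + 3 ≤ 4 * #G.edgeFinset := by
    have := Nat.div_add_mod (n ^ 2) 4
    omega
  have hm : #G.edgeFinset ≤ n * #(G.cliqueFinset 3) := by nlinarith
  have hlt : n * (n / 4) < n * #(G.cliqueFinset 3) := by nlinarith [Nat.div_mul_le_self n 4]
  exact (Nat.lt_of_mul_lt_mul_left hlt).le
end

section
/- A 3-uniform hypergraph on n vertices containing no Berge triangle has at most n²/8 hyperedges. -/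
open Finset

noncomputable def otherElt {α : Type*} [DecidableEq α] [LinearOrder α] (x : α) (q : Finset α) : α :=
  if h : (q.erase x).Nonempty then (q.erase x).min' h else x

lemma otherElt_spec {α : Type*} [DecidableEq α] [LinearOrder α] {x : α} {q : Finset α}
    (hx : x ∈ q) (h2 : q.card = 2) : otherElt x q ≠ x ∧ q = {x, otherElt x q} := by
  obtain ⟨a, b, hab, rfl⟩ := Finset.card_eq_two.mp h2
  rcases Finset.mem_insert.mp hx with rfl | hx
  · have he : ({x, b} : Finset α).erase x = {b} := by
      rw [Finset.erase_insert (by simpa using hab)]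
    have hval : otherElt x {x, b} = b := by
      rw [otherElt, dif_pos (by rw [he]; exact ⟨b, Finset.mem_singleton_self b⟩)]
      simp [he]
    rw [hval]
    exact ⟨hab.symm, rfl⟩
  · rw [Finset.mem_singleton] at hx; subst hx
    have he : ({a, x} : Finset α).erase x = {a} := by
      rw [Finset.pair_comm, Finset.erase_insert (by simpa using hab.symm)]
    have hval : otherElt x {a, x} = a := by
      rw [otherElt, dif_pos (by rw [he]; exact ⟨a, Finset.mem_singleton_self a⟩)]
      simp [he]
    rw [hval]
    exact ⟨hab, by rw [Finset.pair_comm]⟩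

/-- Mantel's theorem in Finset form. -/
lemma mantel_finset (n : ℕ) (G : Finset (Finset (Fin n)))
    (h2 : ∀ q ∈ G, q.card = 2)
    (tf : ∀ x y z : Fin n, x ≠ y → y ≠ z → x ≠ z →
      ({x, y} : Finset (Fin n)) ∈ G → ({y, z} : Finset (Fin n)) ∈ G →
      ({x, z} : Finset (Fin n)) ∈ G → False) :
    4 * (G.card : ℝ) ≤ (n : ℝ) ^ 2 := by
  classical
  set d : Fin n → ℕ := fun x => (G.filter (fun q => x ∈ q)).card with hd
  -- sum of degrees
  have hsum : ∑ x : Fin n, d x = 2 * G.card := by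
    calc ∑ x : Fin n, d x = ∑ x : Fin n, ∑ q ∈ G, if x ∈ q then 1 else 0 := by
          simp only [hd, Finset.card_filter]
      _ = ∑ q ∈ G, ∑ x : Fin n, if x ∈ q then 1 else 0 := Finset.sum_comm
      _ = ∑ q ∈ G, q.card := by
          refine Finset.sum_congr rfl fun q _ => ?_
          rw [← Finset.card_filter]
          congr 1
          exact Finset.filter_univ_mem q
      _ = 2 * G.card := by
          rw [Finset.sum_congr rfl fun q hq => h2 q hq, Finset.sum_const, smul_eq_mul, mul_comm]
  -- degree bound on edges
  have key : ∀ q ∈ G, ∑ x ∈ q, d x ≤ n := by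
    intro q hq
    obtain ⟨a, b, hab, rfl⟩ := Finset.card_eq_two.mp (h2 q hq)
    rw [Finset.sum_pair hab]
    have hn2 : 2 ≤ n := by
      have := Finset.card_le_univ ({a, b} : Finset (Fin n))
      rw [Finset.card_pair hab] at this
      simpa using this
    set A := G.filter (fun e => a ∈ e) with hA
    set B := G.filter (fun e => b ∈ e) with hB
    have hinter : A ∩ B = {({a, b} : Finset (Fin n))} := by
      ext e
      simp only [hA, hB, Finset.mem_inter, Finset.mem_filter, Finset.mem_singleton]
      constructor
      · rintro ⟨⟨heG, ha⟩, ⟨-, hb⟩⟩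
        refine (Finset.eq_of_subset_of_card_le ?_ ?_).symm
        · intro x hx
          rcases Finset.mem_insert.mp hx with rfl | hx
          · exact ha
          · rw [Finset.mem_singleton] at hx; subst hx; exact hb
        · rw [h2 e heG, Finset.card_pair hab]
      · rintro rfl
        exact ⟨⟨hq, Finset.mem_insert_self a _⟩, ⟨hq, by simp⟩⟩
    set U := (A ∪ B).erase ({a, b} : Finset (Fin n)) with hU
    have hmemU : ∀ e ∈ U, e ∈ G ∧ e ≠ ({a, b} : Finset (Fin n)) ∧ (a ∈ e ∨ b ∈ e) := by
      intro e he
      obtain ⟨hne, hmem⟩ := Finset.mem_erase.mp he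
      rcases Finset.mem_union.mp hmem with h | h
      · exact ⟨(Finset.mem_filter.mp h).1, hne, Or.inl (Finset.mem_filter.mp h).2⟩
      · exact ⟨(Finset.mem_filter.mp h).1, hne, Or.inr (Finset.mem_filter.mp h).2⟩
    set φ : Finset (Fin n) → Fin n := fun e => if a ∈ e then otherElt a e else otherElt b e with hφ
    have hφspec : ∀ e ∈ U, (φ e ∉ ({a, b} : Finset (Fin n))) ∧
        ((a ∈ e ∧ e = {a, φ e}) ∨ (a ∉ e ∧ b ∈ e ∧ e = {b, φ e})) := by
      intro e he
      obtain ⟨heG, hne, hab'⟩ := hmemU e he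
      by_cases ha : a ∈ e
      · obtain ⟨hz, hrep⟩ := otherElt_spec ha (h2 e heG)
        have hφe : φ e = otherElt a e := if_pos ha
        rw [hφe]
        refine ⟨?_, Or.inl ⟨ha, hrep⟩⟩
        simp only [Finset.mem_insert, Finset.mem_singleton]
        rintro (h | h)
        · exact hz h
        · exact hne (hrep.trans (by rw [h]))
      · have hb : b ∈ e := hab'.resolve_left ha
        obtain ⟨hz, hrep⟩ := otherElt_spec hb (h2 e heG)
        have hφe : φ e = otherElt b e := if_neg ha
        rw [hφe]
        refine ⟨?_, Or.inr ⟨ha, hb, hrep⟩⟩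
        simp only [Finset.mem_insert, Finset.mem_singleton]
        rintro (h | h)
        · refine ha ?_
          rw [hrep, h]
          exact Finset.mem_insert_of_mem (Finset.mem_singleton_self a)
        · exact hz h
    have hinj : Set.InjOn φ U := by
      intro e₁ he₁ e₂ he₂ heq
      have he₁' : e₁ ∈ U := he₁
      have he₂' : e₂ ∈ U := he₂
      obtain ⟨hn₁, hc₁⟩ := hφspec e₁ he₁'
      obtain ⟨hn₂, hc₂⟩ := hφspec e₂ he₂'
      have hzab₁ : φ e₁ ≠ a ∧ φ e₁ ≠ b := by
        constructor <;> intro h <;> apply hn₁ <;> simp [h]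
      have hzab₂ : φ e₂ ≠ a ∧ φ e₂ ≠ b := by
        constructor <;> intro h <;> apply hn₂ <;> simp [h]
      rcases hc₁ with ⟨ha₁, hrep₁⟩ | ⟨ha₁, hb₁, hrep₁⟩ <;>
        rcases hc₂ with ⟨ha₂, hrep₂⟩ | ⟨ha₂, hb₂, hrep₂⟩
      · rw [hrep₁, hrep₂, heq]
      · exfalso
        have hg1 : ({a, φ e₁} : Finset (Fin n)) ∈ G := by rw [← hrep₁]; exact (hmemU _ he₁').1
        have hg2 : ({b, φ e₁} : Finset (Fin n)) ∈ G := by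
          rw [heq, ← hrep₂]; exact (hmemU _ he₂').1
        exact tf a b (φ e₁) hab hzab₁.2.symm hzab₁.1.symm hq hg2 hg1
      · exfalso
        have hg1 : ({a, φ e₂} : Finset (Fin n)) ∈ G := by rw [← hrep₂]; exact (hmemU _ he₂').1
        have hg2 : ({b, φ e₂} : Finset (Fin n)) ∈ G := by
          rw [← heq, ← hrep₁]; exact (hmemU _ he₁').1
        exact tf a b (φ e₂) hab hzab₂.2.symm hzab₂.1.symm hq hg2 hg1
      · rw [hrep₁, hrep₂, heq]
    have hmaps : ∀ e ∈ U, φ e ∈ ((univ : Finset (Fin n)) \ {a, b}) := by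
      intro e he
      have := (hφspec e he).1
      simp only [Finset.mem_sdiff, Finset.mem_univ, true_and]
      exact this
    have hcardU : U.card ≤ n - 2 := by
      have h := Finset.card_le_card_of_injOn φ hmaps hinj
      have hc : ((univ : Finset (Fin n)) \ {a, b}).card = n - 2 := by
        rw [Finset.card_sdiff_of_subset (Finset.subset_univ _), Finset.card_pair hab,
          Finset.card_univ, Fintype.card_fin]
      omega
    have hUcard : (A ∪ B).card ≤ U.card + 1 := by
      have hmem : ({a, b} : Finset (Fin n)) ∈ A ∪ B :=
        Finset.mem_union.mpr (Or.inl (Finset.mem_filter.mpr ⟨hq, Finset.mem_insert_self _ _⟩))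
      have h' := Finset.card_erase_add_one hmem
      rw [← hU] at h'
      omega
    have hcui := Finset.card_union_add_card_inter A B
    rw [hinter, Finset.card_singleton] at hcui
    have hda : d a = A.card := rfl
    have hdb : d b = B.card := rfl
    omega
  -- sum of squares
  have hsq : ∑ x : Fin n, d x ^ 2 ≤ G.card * n := by
    have h1 : ∀ x : Fin n, d x ^ 2 = ∑ q ∈ G, if x ∈ q then d x else 0 := by
      intro x
      rw [← Finset.sum_filter, Finset.sum_const, smul_eq_mul, sq]
    calc ∑ x : Fin n, d x ^ 2 = ∑ x : Fin n, ∑ q ∈ G, if x ∈ q then d x else 0 :=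
          Finset.sum_congr rfl fun x _ => h1 x
      _ = ∑ q ∈ G, ∑ x : Fin n, if x ∈ q then d x else 0 := Finset.sum_comm
      _ = ∑ q ∈ G, ∑ x ∈ q, d x := by
          refine Finset.sum_congr rfl fun q _ => ?_
          rw [← Finset.sum_filter]
          congr 1
          exact Finset.filter_univ_mem q
      _ ≤ ∑ _q ∈ G, n := Finset.sum_le_sum key
      _ = G.card * n := by rw [Finset.sum_const, smul_eq_mul]
  -- Cauchy–Schwarz and conclusion
  by_cases hG0 : G.card = 0
  · rw [hG0]
    norm_num

  · have hGpos : (0 : ℝ) < G.card := by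
      exact_mod_cast Nat.pos_of_ne_zero hG0
    have cs := sq_sum_le_card_mul_sum_sq (s := (univ : Finset (Fin n))) (f := fun x => (d x : ℝ))
    have hcast1 : (∑ x : Fin n, (d x : ℝ)) = 2 * (G.card : ℝ) := by
      rw [← Nat.cast_sum, hsum]
      push_cast
      ring
    have hcast2 : (∑ x : Fin n, (d x : ℝ) ^ 2) ≤ (G.card : ℝ) * n := by
      calc (∑ x : Fin n, (d x : ℝ) ^ 2) = ((∑ x : Fin n, d x ^ 2 : ℕ) : ℝ) := by push_cast; rfl
        _ ≤ ((G.card * n : ℕ) : ℝ) := Nat.cast_le.mpr hsq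
        _ = (G.card : ℝ) * n := by push_cast; ring
    rw [hcast1, Finset.card_univ, Fintype.card_fin] at cs
    have h3 : (2 * (G.card : ℝ)) ^ 2 ≤ (n : ℝ) * ((G.card : ℝ) * n) :=
      le_trans cs (by
        apply mul_le_mul_of_nonneg_left hcast2
        positivity)
    nlinarith [h3, hGpos]

/-- A pair of vertices contained in at least two distinct hyperedges. -/
def HeavyPair {V : Type*} (H : Finset (Finset V)) (q : Finset V) : Prop :=
  ∃ e₁ ∈ H, ∃ e₂ ∈ H, e₁ ≠ e₂ ∧ q ⊆ e₁ ∧ q ⊆ e₂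

/-- A Berge triangle in a hypergraph: three distinct vertices and three distinct
hyperedges covering the three vertex pairs cyclically. -/
def HasBergeTriangle {V : Type*} (H : Finset (Finset V)) : Prop :=
  ∃ (v₁ v₂ v₃ : V) (h₁ h₂ h₃ : Finset V),
    v₁ ≠ v₂ ∧ v₂ ≠ v₃ ∧ v₁ ≠ v₃ ∧ h₁ ≠ h₂ ∧ h₂ ≠ h₃ ∧ h₁ ≠ h₃ ∧
    h₁ ∈ H ∧ h₂ ∈ H ∧ h₃ ∈ H ∧
    v₁ ∈ h₁ ∧ v₂ ∈ h₁ ∧ v₂ ∈ h₂ ∧ v₃ ∈ h₂ ∧ v₃ ∈ h₃ ∧ v₁ ∈ h₃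

/-- Győri's theorem: a Berge-triangle-free 3-uniform hypergraph on `n` vertices
has at most `n²/8` hyperedges. -/
theorem gyori_berge_triangle (n : ℕ) (H : Finset (Finset (Fin n)))
    (hunif : ∀ e ∈ H, e.card = 3)
    (hfree : ¬ HasBergeTriangle H) :
    (H.card : ℝ) ≤ (n : ℝ) ^ 2 / 8 := by
  classical
  have berge : ∀ (x y z : Fin n) (e₁ e₂ e₃ : Finset (Fin n)), x ≠ y → y ≠ z → x ≠ z →
      e₁ ≠ e₂ → e₂ ≠ e₃ → e₁ ≠ e₃ → e₁ ∈ H → e₂ ∈ H → e₃ ∈ H →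
      x ∈ e₁ → y ∈ e₁ → y ∈ e₂ → z ∈ e₂ → z ∈ e₃ → x ∈ e₃ → False := by
    intro x y z e₁ e₂ e₃ h1 h2 h3 h4 h5 h6 m1 m2 m3 p1 p2 p3 p4 p5 p6
    exact hfree ⟨x, y, z, e₁, e₂, e₃, h1, h2, h3, h4, h5, h6, m1, m2, m3, p1, p2, p3, p4, p5, p6⟩
  have light_unique : ∀ (q e₁ e₂ : Finset (Fin n)), ¬ HeavyPair H q → e₁ ∈ H → e₂ ∈ H →
      q ⊆ e₁ → q ⊆ e₂ → e₁ = e₂ := by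
    intro q e₁ e₂ hq h1 h2 hs1 hs2
    by_contra hne
    exact hq ⟨e₁, h1, e₂, h2, hne, hs1, hs2⟩
  -- each hyperedge contains at most one heavy pair
  have one_heavy : ∀ e ∈ H, ∀ p₁, p₁ ⊆ e → p₁.card = 2 → HeavyPair H p₁ →
      ∀ p₂, p₂ ⊆ e → p₂.card = 2 → HeavyPair H p₂ → p₁ = p₂ := by
    intro e he p₁ hp₁s hp₁c hp₁h p₂ hp₂s hp₂c hp₂h
    by_contra hne
    have hinter : (p₁ ∩ p₂).Nonempty := by
      rw [← Finset.card_pos]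
      have hu : (p₁ ∪ p₂).card ≤ 3 := by
        have hsube : p₁ ∪ p₂ ⊆ e := Finset.union_subset hp₁s hp₂s
        calc (p₁ ∪ p₂).card ≤ e.card := Finset.card_le_card hsube
          _ = 3 := hunif e he
      have := Finset.card_union_add_card_inter p₁ p₂
      omega
    obtain ⟨a, ha⟩ := hinter
    obtain ⟨ha1, ha2⟩ := Finset.mem_inter.mp ha
    obtain ⟨hb, hbrep⟩ := otherElt_spec ha1 hp₁c
    obtain ⟨hc, hcrep⟩ := otherElt_spec ha2 hp₂c
    set b := otherElt a p₁ with hdefb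
    set c := otherElt a p₂ with hdefc
    have hbc : b ≠ c := fun h => hne (by rw [hbrep, hcrep, h])
    have hbp : b ∈ p₁ := by
      rw [hbrep]; exact Finset.mem_insert_of_mem (Finset.mem_singleton_self b)
    have hcp : c ∈ p₂ := by
      rw [hcrep]; exact Finset.mem_insert_of_mem (Finset.mem_singleton_self c)
    have hbe : b ∈ e := hp₁s hbp
    have hce : c ∈ e := hp₂s hcp
    have hae : a ∈ e := hp₁s ha1
    have habc3 : ({a, b, c} : Finset (Fin n)).card = 3 :=
      Finset.card_eq_three.mpr ⟨a, b, c, Ne.symm hb, Ne.symm hc, hbc, rfl⟩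
    have hesub : ({a, b, c} : Finset (Fin n)) ⊆ e := by
      intro x hx
      rcases Finset.mem_insert.mp hx with rfl | hx
      · exact hae
      rcases Finset.mem_insert.mp hx with rfl | hx
      · exact hbe
      rw [Finset.mem_singleton] at hx; subst hx; exact hce
    have hee : ({a, b, c} : Finset (Fin n)) = e :=
      Finset.eq_of_subset_of_card_le hesub (by rw [hunif e he, habc3])
    obtain ⟨f₁, hf₁H, hf₁ne, hf₁s⟩ : ∃ f₁ ∈ H, f₁ ≠ e ∧ p₁ ⊆ f₁ := by
      obtain ⟨g₁, hg₁, g₂, hg₂, hgne, hs₁, hs₂⟩ := hp₁h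
      by_cases h : g₁ = e
      · exact ⟨g₂, hg₂, by rw [← h]; exact hgne.symm, hs₂⟩
      · exact ⟨g₁, hg₁, h, hs₁⟩
    obtain ⟨f₂, hf₂H, hf₂ne, hf₂s⟩ : ∃ f₂ ∈ H, f₂ ≠ e ∧ p₂ ⊆ f₂ := by
      obtain ⟨g₁, hg₁, g₂, hg₂, hgne, hs₁, hs₂⟩ := hp₂h
      by_cases h : g₁ = e
      · exact ⟨g₂, hg₂, by rw [← h]; exact hgne.symm, hs₂⟩
      · exact ⟨g₁, hg₁, h, hs₁⟩
    have hcf₁ : c ∉ f₁ := by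
      intro hcf
      apply hf₁ne
      have hsub : ({a, b, c} : Finset (Fin n)) ⊆ f₁ := by
        intro x hx
        rcases Finset.mem_insert.mp hx with rfl | hx
        · exact hf₁s ha1
        rcases Finset.mem_insert.mp hx with rfl | hx
        · exact hf₁s hbp
        rw [Finset.mem_singleton] at hx; subst hx; exact hcf
      have hef : ({a, b, c} : Finset (Fin n)) = f₁ :=
        Finset.eq_of_subset_of_card_le hsub (by rw [hunif f₁ hf₁H, habc3])
      rw [← hef]; exact hee
    have hf₁f₂ : f₁ ≠ f₂ := by
      intro h
      exact hcf₁ (h ▸ hf₂s hcp)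
    exact berge b a c f₁ f₂ e hb (Ne.symm hc) hbc hf₁f₂ hf₂ne hf₁ne hf₁H hf₂H he
      (hf₁s hbp) (hf₁s ha1) (hf₂s ha2) (hf₂s hcp) hce hbe
  -- each hyperedge has at least two light pairs
  have hlight2 : ∀ e ∈ H, 2 ≤ ((e.powersetCard 2).filter (fun q => ¬ HeavyPair H q)).card := by
    intro e he
    have hps : (e.powersetCard 2).card = 3 := by
      rw [Finset.card_powersetCard, hunif e he]
      decide
    have hheavy1 : ((e.powersetCard 2).filter (fun q => HeavyPair H q)).card ≤ 1 := by
      rw [Finset.card_le_one]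
      intro p₁ h₁ p₂ h₂
      obtain ⟨hm₁, hh₁⟩ := Finset.mem_filter.mp h₁
      obtain ⟨hm₂, hh₂⟩ := Finset.mem_filter.mp h₂
      obtain ⟨hs₁, hc₁⟩ := Finset.mem_powersetCard.mp hm₁
      obtain ⟨hs₂, hc₂⟩ := Finset.mem_powersetCard.mp hm₂
      exact one_heavy e he p₁ hs₁ hc₁ hh₁ p₂ hs₂ hc₂ hh₂
    have := Finset.card_filter_add_card_filter_not
      (s := e.powersetCard 2) (p := fun q => HeavyPair H q)
    omega
  have hch : ∀ e : Finset (Fin n), ∃ t, e ∈ H →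
      t ⊆ (e.powersetCard 2).filter (fun q => ¬ HeavyPair H q) ∧ t.card = 2 := by
    intro e
    by_cases he : e ∈ H
    · obtain ⟨t, ht, htc⟩ := Finset.exists_subset_card_eq (hlight2 e he)
      exact ⟨t, fun _ => ⟨ht, htc⟩⟩
    · exact ⟨∅, fun h => absurd h he⟩
  choose f hf using hch
  set G := H.biUnion f with hG
  have hfprop : ∀ e ∈ H, ∀ q ∈ f e, q ⊆ e ∧ q.card = 2 ∧ ¬ HeavyPair H q := by
    intro e he q hq
    have hmem := (hf e he).1 hq
    obtain ⟨hm, hh⟩ := Finset.mem_filter.mp hmem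
    obtain ⟨hs, hc⟩ := Finset.mem_powersetCard.mp hm
    exact ⟨hs, hc, hh⟩
  have hdisj : ∀ e₁ ∈ H, ∀ e₂ ∈ H, e₁ ≠ e₂ → Disjoint (f e₁) (f e₂) := by
    intro e₁ h₁ e₂ h₂ hne
    rw [Finset.disjoint_left]
    intro q hq₁ hq₂
    obtain ⟨hs₁, -, hh⟩ := hfprop e₁ h₁ q hq₁
    obtain ⟨hs₂, -, -⟩ := hfprop e₂ h₂ q hq₂
    exact hne (light_unique q e₁ e₂ hh h₁ h₂ hs₁ hs₂)
  have hGcard : G.card = 2 * H.card := by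
    rw [hG, Finset.card_biUnion hdisj,
      Finset.sum_congr rfl (fun e he => (hf e he).2), Finset.sum_const, smul_eq_mul, mul_comm]
  have h2 : ∀ q ∈ G, q.card = 2 := by
    intro q hq
    obtain ⟨e, he, hqe⟩ := Finset.mem_biUnion.mp hq
    exact (hfprop e he q hqe).2.1
  have tf : ∀ x y z : Fin n, x ≠ y → y ≠ z → x ≠ z →
      ({x, y} : Finset (Fin n)) ∈ G → ({y, z} : Finset (Fin n)) ∈ G →
      ({x, z} : Finset (Fin n)) ∈ G → False := by
    intro x y z hxy hyz hxz hm₁ hm₂ hm₃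
    obtain ⟨e₁, he₁, hq₁⟩ := Finset.mem_biUnion.mp hm₁
    obtain ⟨e₂, he₂, hq₂⟩ := Finset.mem_biUnion.mp hm₂
    obtain ⟨e₃, he₃, hq₃⟩ := Finset.mem_biUnion.mp hm₃
    obtain ⟨hs₁, hc₁, hl₁⟩ := hfprop e₁ he₁ _ hq₁
    obtain ⟨hs₂, hc₂, hl₂⟩ := hfprop e₂ he₂ _ hq₂
    obtain ⟨hs₃, hc₃, hl₃⟩ := hfprop e₃ he₃ _ hq₃
    have hx1 : x ∈ e₁ := hs₁ (Finset.mem_insert_self _ _)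
    have hy1 : y ∈ e₁ := hs₁ (by simp)
    have hy2 : y ∈ e₂ := hs₂ (Finset.mem_insert_self _ _)
    have hz2 : z ∈ e₂ := hs₂ (by simp)
    have hx3 : x ∈ e₃ := hs₃ (Finset.mem_insert_self _ _)
    have hz3 : z ∈ e₃ := hs₃ (by simp)
    have allsame : ∀ e ∈ H, ({x, y} : Finset (Fin n)) ∈ f e →
        ({y, z} : Finset (Fin n)) ∈ f e → ({x, z} : Finset (Fin n)) ∈ f e → False := by
      intro e he a1 a2 a3
      have hne1 : ({x, y} : Finset (Fin n)) ≠ {y, z} := by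
        intro h
        have : x ∈ ({y, z} : Finset (Fin n)) := h ▸ Finset.mem_insert_self x {y}
        rcases Finset.mem_insert.mp this with h' | h'
        · exact hxy h'
        · exact hxz (Finset.mem_singleton.mp h')
      have hne2 : ({x, y} : Finset (Fin n)) ≠ {x, z} := by
        intro h
        have : y ∈ ({x, z} : Finset (Fin n)) := h ▸ (by simp : y ∈ ({x, y} : Finset (Fin n)))
        rcases Finset.mem_insert.mp this with h' | h'
        · exact hxy h'.symm
        · exact hyz (Finset.mem_singleton.mp h')
      have hne3 : ({y, z} : Finset (Fin n)) ≠ {x, z} := by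
        intro h
        have : y ∈ ({x, z} : Finset (Fin n)) := h ▸ Finset.mem_insert_self y {z}
        rcases Finset.mem_insert.mp this with h' | h'
        · exact hxy h'.symm
        · exact hyz (Finset.mem_singleton.mp h')
      have hsub : ({({x, y} : Finset (Fin n)), {y, z}, {x, z}} : Finset (Finset (Fin n))) ⊆ f e := by
        intro p hp
        rcases Finset.mem_insert.mp hp with rfl | hp
        · exact a1
        rcases Finset.mem_insert.mp hp with rfl | hp
        · exact a2
        rw [Finset.mem_singleton] at hp; subst hp; exact a3
      have hc3 : ({({x, y} : Finset (Fin n)), {y, z}, {x, z}} : Finset (Finset (Fin n))).card = 3 :=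
        Finset.card_eq_three.mpr ⟨_, _, _, hne1, hne2, hne3, rfl⟩
      have hle := Finset.card_le_card hsub
      rw [hc3, (hf e he).2] at hle
      omega
    by_cases h12 : e₁ = e₂
    · subst h12
      have hxz1 : ({x, z} : Finset (Fin n)) ⊆ e₁ := by
        intro w hw
        rcases Finset.mem_insert.mp hw with rfl | hw
        · exact hx1
        rw [Finset.mem_singleton] at hw; subst hw; exact hz2
      have h31 : e₃ = e₁ := light_unique _ e₃ e₁ hl₃ he₃ he₁ hs₃ hxz1
      exact allsame e₁ he₁ hq₁ hq₂ (h31 ▸ hq₃)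
    by_cases h23 : e₂ = e₃
    · subst h23
      have hxy2 : ({x, y} : Finset (Fin n)) ⊆ e₂ := by
        intro w hw
        rcases Finset.mem_insert.mp hw with rfl | hw
        · exact hx3
        rw [Finset.mem_singleton] at hw; subst hw; exact hy2
      have h12' : e₁ = e₂ := light_unique _ e₁ e₂ hl₁ he₁ he₂ hs₁ hxy2
      exact allsame e₂ he₂ (h12' ▸ hq₁) hq₂ hq₃
    by_cases h13 : e₁ = e₃
    · subst h13
      have hyz1 : ({y, z} : Finset (Fin n)) ⊆ e₁ := by
        intro w hw
        rcases Finset.mem_insert.mp hw with rfl | hw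
        · exact hy1
        rw [Finset.mem_singleton] at hw; subst hw; exact hz3
      have h21 : e₂ = e₁ := light_unique _ e₂ e₁ hl₂ he₂ he₁ hs₂ hyz1
      exact allsame e₁ he₁ hq₁ (h21 ▸ hq₂) hq₃
    · exact berge x y z e₁ e₂ e₃ hxy hyz hxz h12 h23 h13 he₁ he₂ he₃
        hx1 hy1 hy2 hz2 hz3 hx3
  have hm := mantel_finset n G h2 tf
  rw [hGcard] at hm
  push_cast at hm
  linarith
end

section
/- For every n divisible by 4 there exists a 3-uniform hypergraph on n vertices with exactly n²/8 hyperedges that contains no Berge triangle (and hence no Berge k-book for any k). -/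
abbrev BV (m : ℕ) := (Fin (2 * m)) ⊕ (Fin m × Bool)

def bedge {m : ℕ} (u : Fin (2 * m)) (b : Fin m) : Finset (BV m) :=
  {Sum.inl u, Sum.inr (b, true), Sum.inr (b, false)}

lemma mem_bedge {m : ℕ} {v : BV m} {u : Fin (2 * m)} {b : Fin m} :
    v ∈ bedge u b ↔ v = Sum.inl u ∨ v = Sum.inr (b, true) ∨ v = Sum.inr (b, false) := by
  simp [bedge]

lemma bedge_card {m : ℕ} (u : Fin (2 * m)) (b : Fin m) : (bedge u b).card = 3 := by
  rw [bedge]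
  rw [Finset.card_insert_of_notMem (by simp), Finset.card_insert_of_notMem (by simp)]
  simp

@[simp] lemma bedge_eq_bedge {m : ℕ} {u u' : Fin (2 * m)} {b b' : Fin m} :
    bedge u b = bedge u' b' ↔ u = u' ∧ b = b' := by
  constructor
  · intro h
    have h1 : (Sum.inl u : BV m) ∈ bedge u' b' := by rw [← h]; simp [mem_bedge]
    have h2 : (Sum.inr (b, true) : BV m) ∈ bedge u' b' := by rw [← h]; simp [mem_bedge]
    rw [mem_bedge] at h1 h2
    simp at h1 h2
    exact ⟨h1, h2⟩
  · rintro ⟨rfl, rfl⟩; rfl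

def H₀ (m : ℕ) : Finset (Finset (BV m)) :=
  (Finset.univ : Finset (Fin (2 * m) × Fin m)).image fun p => bedge p.1 p.2

lemma H₀_card (m : ℕ) : (H₀ m).card = 2 * m * m := by
  rw [H₀, Finset.card_image_of_injective]
  · simp
  · intro p q h
    rw [bedge_eq_bedge] at h
    exact Prod.ext h.1 h.2

lemma H₀_no_triangle (m : ℕ) : ¬ HasBergeTriangle (H₀ m) := by
  rintro ⟨v₁, v₂, v₃, h₁, h₂, h₃, d12, d23, d13, e12, e23, e13, m1, m2, m3,
    a11, a12, a22, a23, a33, a31⟩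
  simp only [H₀, Finset.mem_image, Finset.mem_univ, true_and] at m1 m2 m3
  obtain ⟨⟨u₁, b₁⟩, rfl⟩ := m1
  obtain ⟨⟨u₂, b₂⟩, rfl⟩ := m2
  obtain ⟨⟨u₃, b₃⟩, rfl⟩ := m3
  rw [mem_bedge] at a11 a12 a22 a23 a33 a31
  rcases a11 with rfl|rfl|rfl <;> rcases a22 with rfl|rfl|rfl <;>
    rcases a33 with rfl|rfl|rfl <;> simp_all

lemma no_triangle_image {V W : Type*} [DecidableEq V] [DecidableEq W] (e : V ≃ W)
    (H : Finset (Finset V)) (h : ¬ HasBergeTriangle H) :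
    ¬ HasBergeTriangle (H.image (Finset.map e.toEmbedding)) := by
  rintro ⟨v₁, v₂, v₃, h₁, h₂, h₃, d12, d23, d13, f12, f23, f13, m1, m2, m3,
    a11, a12, a22, a23, a33, a31⟩
  simp only [Finset.mem_image] at m1 m2 m3
  obtain ⟨g₁, hg₁, rfl⟩ := m1
  obtain ⟨g₂, hg₂, rfl⟩ := m2
  obtain ⟨g₃, hg₃, rfl⟩ := m3
  refine h ⟨e.symm v₁, e.symm v₂, e.symm v₃, g₁, g₂, g₃,
    fun hh => d12 (e.symm.injective hh), fun hh => d23 (e.symm.injective hh),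
    fun hh => d13 (e.symm.injective hh),
    fun hh => f12 (by rw [hh]), fun hh => f23 (by rw [hh]), fun hh => f13 (by rw [hh]),
    hg₁, hg₂, hg₃, ?_, ?_, ?_, ?_, ?_, ?_⟩ <;>
  first
  | exact Finset.mem_map_equiv.mp a11
  | exact Finset.mem_map_equiv.mp a12
  | exact Finset.mem_map_equiv.mp a22
  | exact Finset.mem_map_equiv.mp a23
  | exact Finset.mem_map_equiv.mp a33
  | exact Finset.mem_map_equiv.mp a31

/-- Sharpness construction: for every `n` divisible by `4` there is a 3-uniform
hypergraph on `n` vertices with exactly `n²/8` hyperedges and no Berge triangle. -/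
theorem berge_triangle_free_construction (n : ℕ) (hn : 4 ∣ n) :
    ∃ H : Finset (Finset (Fin n)),
      (∀ e ∈ H, e.card = 3) ∧ H.card = n ^ 2 / 8 ∧ ¬ HasBergeTriangle H := by
  obtain ⟨m, rfl⟩ := hn
  have hcard : Fintype.card (BV m) = 4 * m := by
    simp [BV]
    ring
  let e : BV m ≃ Fin (4 * m) := Fintype.equivFinOfCardEq hcard
  refine ⟨(H₀ m).image (Finset.map e.toEmbedding), ?_, ?_, ?_⟩
  · intro s hs
    simp only [Finset.mem_image] at hs
    obtain ⟨g, hg, rfl⟩ := hs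
    rw [Finset.card_map]
    simp only [H₀, Finset.mem_image, Finset.mem_univ, true_and] at hg
    obtain ⟨⟨u, b⟩, rfl⟩ := hg
    exact bedge_card u b
  · rw [Finset.card_image_of_injective _ (Finset.map_injective e.toEmbedding), H₀_card]
    have : (4 * m) ^ 2 = 8 * (2 * m * m) := by ring
    rw [this, Nat.mul_div_cancel_left _ (by norm_num)]
  · exact no_triangle_image e (H₀ m) (H₀_no_triangle m)
end

section
/- Let H be a 3-uniform hypergraph with no Berge k-book (k ≥ 2). Then every pair of vertices of H is contained in at most 2k−2 hyperedges which each contain at least two 'blue' pairs, where a pair of vertices is called blue if it lies in at least two hyperedges of H. -/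
/-- A Berge `k`-book: `k` Berge triangles on a common base pair `{u,v}`
(base hyperedge `e₀` possibly shared), with all involved hyperedges distinct. -/
def HasBergeBook {V : Type*} (H : Finset (Finset V)) (k : ℕ) : Prop :=
  ∃ (u v : V) (x : Fin k → V) (e₀ : Finset V) (f g : Fin k → Finset V),
    u ≠ v ∧ Function.Injective x ∧ (∀ i, x i ≠ u ∧ x i ≠ v) ∧
    e₀ ∈ H ∧ u ∈ e₀ ∧ v ∈ e₀ ∧
    (∀ i, f i ∈ H ∧ g i ∈ H ∧ u ∈ f i ∧ x i ∈ f i ∧ v ∈ g i ∧ x i ∈ g i) ∧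
    Function.Injective f ∧ Function.Injective g ∧
    (∀ i j, f i ≠ g j) ∧ (∀ i, e₀ ≠ f i ∧ e₀ ≠ g i)

/-- A pair (2-element set) `p` of vertices is blue if at least two hyperedges of `H`
contain it. -/
def BluePair {V : Type*} [DecidableEq V] (H : Finset (Finset V)) (p : Finset V) : Prop :=
  2 ≤ (H.filter (fun h => p ⊆ h)).card

instance {V : Type*} [DecidableEq V] (H : Finset (Finset V)) :
    DecidablePred (BluePair H) := fun p => by unfold BluePair; infer_instance

/-- In a Berge-`k`-book-free 3-uniform hypergraph (`k ≥ 2`), every pair of vertices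
lies in at most `2k - 2` hyperedges that each contain at least two blue pairs. -/
theorem pair_degree_in_blue_edges (n k : ℕ) (hk : 2 ≤ k)
    (H : Finset (Finset (Fin n))) (hunif : ∀ e ∈ H, e.card = 3)
    (hfree : ¬ HasBergeBook H k) (u v : Fin n) (huv : u ≠ v) :
    ((H.filter (fun e =>
        2 ≤ ((e.powersetCard 2).filter (fun p => BluePair H p)).card)).filter
      (fun e => u ∈ e ∧ v ∈ e)).card ≤ 2 * k - 2 := by
  classical
  by_contra hcon
  push_neg at hcon
  set S : Finset (Finset (Fin n)) :=
    ((H.filter (fun e =>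
        2 ≤ ((e.powersetCard 2).filter (fun p => BluePair H p)).card)).filter
      (fun e => u ∈ e ∧ v ∈ e)) with hSdef
  have hSmem : ∀ e ∈ S, e ∈ H ∧
      2 ≤ ((e.powersetCard 2).filter (fun p => BluePair H p)).card ∧ u ∈ e ∧ v ∈ e := by
    intro e he
    rw [hSdef, Finset.mem_filter, Finset.mem_filter] at he
    exact ⟨he.1.1, he.1.2, he.2.1, he.2.2⟩
  have hScard : 2 * k - 1 ≤ S.card := by omega
  apply hfree
  -- main extraction: third vertex and blue witness
  have main : ∀ e : Finset (Fin n), ∃ (x : Fin n) (w : Finset (Fin n)), e ∈ S →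
      x ∈ e ∧ x ≠ u ∧ x ≠ v ∧ e = {u, v, x} ∧ w ∈ H ∧ w ≠ e ∧ x ∈ w ∧
      ((u ∈ w ∧ v ∉ w) ∨ (v ∈ w ∧ u ∉ w)) := by
    intro e
    by_cases he : e ∈ S
    swap
    · exact ⟨u, ∅, fun h => absurd h he⟩
    obtain ⟨heH, hblue, hue, hve⟩ := hSmem e he
    have he3 : e.card = 3 := hunif e heH
    have huvsub : ({u, v} : Finset (Fin n)) ⊆ e := by
      intro a ha; simp only [Finset.mem_insert, Finset.mem_singleton] at ha
      rcases ha with rfl | rfl <;> assumption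
    have huv2 : ({u, v} : Finset (Fin n)).card = 2 := by
      rw [Finset.card_insert_of_notMem (by simpa using huv), Finset.card_singleton]
    have hone : (e \ {u, v}).card = 1 := by
      rw [Finset.card_sdiff_of_subset huvsub, he3, huv2]
    obtain ⟨x, hx⟩ := Finset.card_eq_one.mp hone
    have hxmem : x ∈ e \ {u, v} := by rw [hx]; exact Finset.mem_singleton_self x
    have hxe : x ∈ e := (Finset.mem_sdiff.mp hxmem).1
    have hxuv : x ≠ u ∧ x ≠ v := by
      have := (Finset.mem_sdiff.mp hxmem).2
      simp only [Finset.mem_insert, Finset.mem_singleton] at this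
      exact ⟨fun h => this (Or.inl h), fun h => this (Or.inr h)⟩
    have heq : e = {u, v, x} := by
      have h1 : ({u, v} : Finset (Fin n)) ∪ (e \ {u, v}) = e :=
        Finset.union_sdiff_of_subset huvsub
    -- rewrite
      rw [hx] at h1
      rw [← h1]
      ext a
      simp only [Finset.mem_union, Finset.mem_insert, Finset.mem_singleton]
      tauto
    have hcard3uvx : ({u, v, x} : Finset (Fin n)).card = 3 := by rw [← heq]; exact he3
    -- find a blue pair different from {u,v}
    obtain ⟨p, hpf, hpne⟩ :=
      Finset.exists_mem_ne (lt_of_lt_of_le one_lt_two hblue) ({u, v} : Finset (Fin n))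
    rw [Finset.mem_filter, Finset.mem_powersetCard] at hpf
    obtain ⟨⟨hpsub, hp2⟩, hpblue⟩ := hpf
    -- p = {u,x} or {v,x}
    have hpcase : p = {u, x} ∨ p = {v, x} := by
      obtain ⟨a, b, hab, rfl⟩ := Finset.card_eq_two.mp hp2
      have hamem : a ∈ ({u, v, x} : Finset (Fin n)) := by rw [← heq]; exact hpsub (by simp)
      have hbmem : b ∈ ({u, v, x} : Finset (Fin n)) := by rw [← heq]; exact hpsub (by simp)
      simp only [Finset.mem_insert, Finset.mem_singleton] at hamem hbmem
      have hpc : ({a, b} : Finset (Fin n)) = {b, a} := Finset.pair_comm a b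
      rcases hamem with rfl | rfl | rfl <;> rcases hbmem with rfl | rfl | rfl
      · exact absurd rfl hab
      · exact absurd rfl hpne
      · exact Or.inl rfl
      · exact absurd (Finset.pair_comm a b) hpne
      · exact absurd rfl hab
      · exact Or.inr rfl
      · exact Or.inl (Finset.pair_comm a b)
      · exact Or.inr (Finset.pair_comm a b)
      · exact absurd rfl hab
    -- blue witness
    have heblue : e ∈ H.filter (fun h => p ⊆ h) := Finset.mem_filter.mpr ⟨heH, hpsub⟩
    obtain ⟨w, hwf, hwne⟩ :=
      Finset.exists_mem_ne (lt_of_lt_of_le one_lt_two hpblue) e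
    rw [Finset.mem_filter] at hwf
    obtain ⟨hwH, hpw⟩ := hwf
    have hw3 : w.card = 3 := hunif w hwH
    refine ⟨x, w, fun _ => ⟨hxe, hxuv.1, hxuv.2, heq, hwH, hwne, ?_, ?_⟩⟩
    · rcases hpcase with rfl | rfl <;> exact hpw (by simp)
    · rcases hpcase with rfl | rfl
      · refine Or.inl ⟨hpw (by simp), fun hvw => hwne ?_⟩
        have hsub : e ⊆ w := by
          rw [heq]; intro a ha
          simp only [Finset.mem_insert, Finset.mem_singleton] at ha
          rcases ha with rfl | rfl | rfl
          · exact hpw (by simp)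
          · exact hvw
          · exact hpw (by simp)
        exact (Finset.eq_of_subset_of_card_le hsub (by rw [hw3, he3])).symm
      · refine Or.inr ⟨hpw (by simp), fun huw => hwne ?_⟩
        have hsub : e ⊆ w := by
          rw [heq]; intro a ha
          simp only [Finset.mem_insert, Finset.mem_singleton] at ha
          rcases ha with rfl | rfl | rfl
          · exact huw
          · exact hpw (by simp)
          · exact hpw (by simp)
        exact (Finset.eq_of_subset_of_card_le hsub (by rw [hw3, he3])).symm
  choose xf wf hmain using main
  -- fibers of wf over S have size ≤ 2
  have hfib : ∀ b ∈ S.image wf, (S.filter (fun e => wf e = b)).card ≤ 2 := by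
    intro b _
    by_contra hb
    push_neg at hb
    obtain ⟨e1, e2, e3, h1, h2, h3, h12, h13, h23⟩ := Finset.two_lt_card_iff.mp hb
    rw [Finset.mem_filter] at h1 h2 h3
    obtain ⟨he1, hw1⟩ := h1; obtain ⟨he2, hw2⟩ := h2; obtain ⟨he3, hw3⟩ := h3
    obtain ⟨_, hx1u, hx1v, heq1, _, _, hxw1, hty1⟩ := hmain e1 he1
    obtain ⟨_, hx2u, hx2v, heq2, _, _, hxw2, hty2⟩ := hmain e2 he2
    obtain ⟨_, hx3u, hx3v, heq3, _, _, hxw3, hty3⟩ := hmain e3 he3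
    rw [hw1] at hxw1 hty1; rw [hw2] at hxw2 hty2; rw [hw3] at hxw3 hty3
    have hbH : b ∈ H := by rw [← hw1]; exact (hmain e1 he1).2.2.2.2.1
    have hb3 : b.card = 3 := hunif b hbH
    have hxne12 : xf e1 ≠ xf e2 := fun h => h12 (by rw [heq1, heq2, h])
    have hxne13 : xf e1 ≠ xf e3 := fun h => h13 (by rw [heq1, heq3, h])
    have hxne23 : xf e2 ≠ xf e3 := fun h => h23 (by rw [heq2, heq3, h])
    have key : ∀ z : Fin n, z ∈ b → z ≠ xf e1 → z ≠ xf e2 → z ≠ xf e3 → False := by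
      intro z hz hz1 hz2 hz3
      have hsub : ({z, xf e1, xf e2, xf e3} : Finset (Fin n)) ⊆ b := by
        intro a ha
        simp only [Finset.mem_insert, Finset.mem_singleton] at ha
        rcases ha with rfl | rfl | rfl | rfl <;> assumption
      have hc4 : ({z, xf e1, xf e2, xf e3} : Finset (Fin n)).card = 4 := by
        rw [Finset.card_insert_of_notMem (by simp [hz1, hz2, hz3]),
          Finset.card_insert_of_notMem (by simp [hxne12, hxne13]),
          Finset.card_insert_of_notMem (by simp [hxne23]), Finset.card_singleton]
      have := Finset.card_le_card hsub
      omega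
    rcases hty1 with ⟨hub, hvb⟩ | ⟨hvb, hub⟩
    · rcases hty2 with ⟨_, _⟩ | ⟨_, hub2⟩
      swap
      · exact hub2 hub
      rcases hty3 with ⟨_, _⟩ | ⟨_, hub3⟩
      swap
      · exact hub3 hub
      exact key u hub (Ne.symm hx1u) (Ne.symm hx2u) (Ne.symm hx3u)
    · rcases hty2 with ⟨hub2, _⟩ | ⟨_, _⟩
      · exact hub hub2
      rcases hty3 with ⟨hub3, _⟩ | ⟨_, _⟩
      · exact hub hub3
      exact key v hvb (Ne.symm hx1v) (Ne.symm hx2v) (Ne.symm hx3v)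
  have himg : k ≤ (S.image wf).card := by
    have := Finset.card_le_mul_card_image S 2 hfib
    omega
  obtain ⟨I, hIsub, hIcard⟩ := Finset.exists_subset_card_eq himg
  -- section of wf
  have hsec : ∀ b : Finset (Fin n), ∃ e, b ∈ S.image wf → e ∈ S ∧ wf e = b := by
    intro b
    by_cases h : b ∈ S.image wf
    · obtain ⟨e, he, hwe⟩ := Finset.mem_image.mp h
      exact ⟨e, fun _ => ⟨he, hwe⟩⟩
    · exact ⟨∅, fun h' => absurd h' h⟩
  choose σ hσ using hsec
  set ι : Fin k → {x // x ∈ I} := fun i => I.equivFin.symm (Fin.cast hIcard.symm i) with hι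
  have hιinj : Function.Injective ι := fun i j h => by
    exact Fin.cast_injective hIcard.symm (I.equivFin.symm.injective h)
  set t : Fin k → Finset (Fin n) := fun i => σ ((ι i : {x // x ∈ I}) : Finset (Fin n)) with ht
  have hmemI : ∀ i : Fin k, ((ι i : {x // x ∈ I}) : Finset (Fin n)) ∈ S.image wf :=
    fun i => hIsub (ι i).2
  have htS : ∀ i, t i ∈ S := fun i => (hσ _ (hmemI i)).1
  have hwt : ∀ i, wf (t i) = ((ι i : {x // x ∈ I}) : Finset (Fin n)) :=
    fun i => (hσ _ (hmemI i)).2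
  have hwtinj : ∀ i j : Fin k, wf (t i) = wf (t j) → i = j := by
    intro i j h
    rw [hwt, hwt] at h
    exact hιinj (Subtype.ext h)
  have htinj : Function.Injective t := fun i j h => hwtinj i j (by rw [h])
  -- base edge
  have hnotsub : ¬ S ⊆ Finset.image t Finset.univ := by
    intro h
    have h1 := Finset.card_le_card h
    have h2 := Finset.card_image_le (f := t) (s := Finset.univ)
    rw [Finset.card_univ, Fintype.card_fin] at h2
    omega
  obtain ⟨e₀, he₀S, he₀not⟩ := Finset.not_subset.mp hnotsub
  have he₀ne : ∀ i, e₀ ≠ t i := fun i h =>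
    he₀not (Finset.mem_image.mpr ⟨i, Finset.mem_univ i, h.symm⟩)
  -- per-index data
  have hdata := fun i => hmain (t i) (htS i)
  set x' : Fin k → Fin n := fun i => xf (t i) with hx'
  set W : Fin k → Finset (Fin n) := fun i => wf (t i) with hW
  have hWfull : ∀ i, ¬ (u ∈ W i ∧ v ∈ W i) := by
    intro i ⟨hu', hv'⟩
    rcases (hdata i).2.2.2.2.2.2.2 with ⟨_, h⟩ | ⟨_, h⟩
    · exact h hv'
    · exact h hu'
  have hWneT : ∀ i j, W i ≠ t j := by
    intro i j h
    have := hSmem (t j) (htS j)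
    exact hWfull i ⟨by rw [h]; exact this.2.2.1, by rw [h]; exact this.2.2.2⟩
  have huvt : ∀ i, u ∈ t i ∧ v ∈ t i := fun i =>
    ⟨(hSmem (t i) (htS i)).2.2.1, (hSmem (t i) (htS i)).2.2.2⟩
  set f : Fin k → Finset (Fin n) := fun i => if u ∈ W i then W i else t i with hf
  set g : Fin k → Finset (Fin n) := fun i => if u ∈ W i then t i else W i with hg
  have htypeB : ∀ i, u ∉ W i → v ∈ W i := by
    intro i h
    rcases (hdata i).2.2.2.2.2.2.2 with ⟨h', _⟩ | ⟨h', _⟩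
    · exact absurd h' h
    · exact h'
  refine ⟨u, v, x', e₀, f, g, huv, ?_, ?_, (hSmem e₀ he₀S).1, (hSmem e₀ he₀S).2.2.1,
    (hSmem e₀ he₀S).2.2.2, ?_, ?_, ?_, ?_, ?_⟩
  · -- x' injective
    intro i j h
    apply htinj
    rw [(hdata i).2.2.2.1, (hdata j).2.2.2.1]
    simp only [hx'] at h
    rw [h]
  · exact fun i => ⟨(hdata i).2.1, (hdata i).2.2.1⟩
  · -- triangle conditions
    intro i
    have hxt : x' i ∈ t i := (hdata i).1
    have hxW : x' i ∈ W i := (hdata i).2.2.2.2.2.2.1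
    have hWH : W i ∈ H := (hdata i).2.2.2.2.1
    have htH : t i ∈ H := (hSmem (t i) (htS i)).1
    by_cases hc : u ∈ W i
    · simp only [hf, hg, if_pos hc]
      exact ⟨hWH, htH, hc, hxW, (huvt i).2, hxt⟩
    · simp only [hf, hg, if_neg hc]
      exact ⟨htH, hWH, (huvt i).1, hxt, htypeB i hc, hxW⟩
  · -- f injective
    intro i j h
    by_cases hi : u ∈ W i <;> by_cases hj : u ∈ W j <;>
      simp only [hf, if_pos, if_neg, hi, hj, if_true, if_false] at h
    · exact hwtinj i j h
    · exact absurd h (hWneT i j)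
    · exact absurd h.symm (hWneT j i)
    · exact htinj h
  · -- g injective
    intro i j h
    by_cases hi : u ∈ W i <;> by_cases hj : u ∈ W j <;>
      simp only [hg, if_pos, if_neg, hi, hj, if_true, if_false] at h
    · exact htinj h
    · exact absurd h.symm (hWneT j i)
    · exact absurd h (hWneT i j)
    · exact hwtinj i j h
  · -- f i ≠ g j
    intro i j h
    by_cases hi : u ∈ W i <;> by_cases hj : u ∈ W j <;>
      simp only [hf, hg, hi, hj, if_true, if_false] at h
    · exact hWneT i j h
    · exact hj (h ▸ hi)
    · exact hi (by rw [htinj h]; exact hj)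
    · exact hWneT j i h.symm
  · -- base distinct
    intro i
    have h0 : u ∈ e₀ ∧ v ∈ e₀ := ⟨(hSmem e₀ he₀S).2.2.1, (hSmem e₀ he₀S).2.2.2⟩
    have hW0 : e₀ ≠ W i := fun h => hWfull i ⟨h ▸ h0.1, h ▸ h0.2⟩
    by_cases hi : u ∈ W i <;> simp only [hf, hg, hi, if_true, if_false]
    · exact ⟨hW0, he₀ne i⟩
    · exact ⟨he₀ne i, hW0⟩
end

section
/- In a 3-uniform hypergraph H with no Berge k-book, a single pair of vertices cannot be contained in 2k−1 or more hyperedges of the subhypergraph H₂ consisting of hyperedges having at least two blue pairs. -/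
lemma third_vertex {n : ℕ} {e : Finset (Fin n)} {u v : Fin n} (huv : u ≠ v)
    (hcard : e.card = 3) (hu : u ∈ e) (hv : v ∈ e) :
    ∃ x : Fin n, x ≠ u ∧ x ≠ v ∧ e = {u, v, x} := by
  have h1 : (e.erase u).card = 2 := by rw [Finset.card_erase_of_mem hu, hcard]
  have hv' : v ∈ e.erase u := Finset.mem_erase.2 ⟨huv.symm, hv⟩
  have h2 : ((e.erase u).erase v).card = 1 := by rw [Finset.card_erase_of_mem hv', h1]
  obtain ⟨x, hx⟩ := Finset.card_eq_one.1 h2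
  have hxm : x ∈ (e.erase u).erase v := hx ▸ Finset.mem_singleton_self x
  rw [Finset.mem_erase, Finset.mem_erase] at hxm
  refine ⟨x, hxm.2.1, hxm.1, ?_⟩
  have h3 : insert u (insert v ((e.erase u).erase v)) = e := by
    rw [Finset.insert_erase hv', Finset.insert_erase hu]
  rw [← h3, hx]

lemma pair_cases {n : ℕ} {p : Finset (Fin n)} {u v x : Fin n}
    (hsub : p ⊆ ({u, v, x} : Finset (Fin n))) (hcard : p.card = 2)
    (hne : p ≠ {u, v}) : p = {u, x} ∨ p = {v, x} := by
  have hx : x ∈ p := by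
    by_contra hx
    have hpsub : p ⊆ ({u, v} : Finset (Fin n)) := by
      intro a ha
      have h := hsub ha
      simp only [Finset.mem_insert, Finset.mem_singleton] at h ⊢
      rcases h with h | h | h
      · exact Or.inl h
      · exact Or.inr h
      · exact absurd (h ▸ ha) hx
    have hle : ({u, v} : Finset (Fin n)).card ≤ p.card := by
      have := Finset.card_insert_le u ({v} : Finset (Fin n))
      simp only [Finset.card_singleton] at this
      omega
    exact hne (Finset.eq_of_subset_of_card_le hpsub hle)
  have h1 : (p.erase x).card = 1 := by rw [Finset.card_erase_of_mem hx, hcard]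
  obtain ⟨w, hw⟩ := Finset.card_eq_one.1 h1
  have hwm : w ∈ p.erase x := hw ▸ Finset.mem_singleton_self w
  rw [Finset.mem_erase] at hwm
  have hp : p = {x, w} := by
    have := Finset.insert_erase hx
    rw [← this, hw]
  have hwuv : w = u ∨ w = v := by
    have h := hsub hwm.2
    simp only [Finset.mem_insert, Finset.mem_singleton] at h
    rcases h with h | h | h
    · exact Or.inl h
    · exact Or.inr h
    · exact absurd h hwm.1
  rcases hwuv with rfl | rfl
  · left; rw [hp, Finset.pair_comm]
  · right; rw [hp, Finset.pair_comm]

/-- In a Berge-`k`-book-free 3-uniform hypergraph, no pair of vertices can lie in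
`2k - 1` or more hyperedges of the subhypergraph `H₂` of hyperedges having at least
two blue pairs. -/
theorem pair_not_in_many_blue_edges (n k : ℕ) (hk : 2 ≤ k)
    (H : Finset (Finset (Fin n))) (hunif : ∀ e ∈ H, e.card = 3)
    (hfree : ¬ HasBergeBook H k) (u v : Fin n) (huv : u ≠ v) :
    ¬ (2 * k - 1 ≤ ((H.filter (fun e =>
        2 ≤ ((e.powersetCard 2).filter (fun p => BluePair H p)).card)).filter
      (fun e => u ∈ e ∧ v ∈ e)).card) := by
  classical
  intro hcard
  apply hfree
  set S := ((H.filter (fun e =>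
      2 ≤ ((e.powersetCard 2).filter (fun p => BluePair H p)).card)).filter
      (fun e => u ∈ e ∧ v ∈ e)) with hS
  have hmem : ∀ e ∈ S, e ∈ H ∧ u ∈ e ∧ v ∈ e ∧
      2 ≤ ((e.powersetCard 2).filter (fun p => BluePair H p)).card := by
    intro e he
    rw [hS, Finset.mem_filter, Finset.mem_filter] at he
    exact ⟨he.1.1, he.2.1, he.2.2, he.1.2⟩
  -- choice of third vertex, a side (Bool) and a second witness edge
  have key : ∀ e : Finset (Fin n), ∃ (x : Fin n) (b : Bool) (s : Finset (Fin n)),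
      e ∈ S → x ≠ u ∧ x ≠ v ∧ e = {u, v, x} ∧ s ∈ H ∧ s ≠ e ∧
        ({(if b then u else v), x} : Finset (Fin n)) ⊆ s := by
    intro e
    by_cases he : e ∈ S
    · obtain ⟨heH, hue, hve, hblue⟩ := hmem e he
      obtain ⟨x, hxu, hxv, hex⟩ := third_vertex huv (hunif e heH) hue hve
      obtain ⟨p, hp, hpne⟩ := Finset.exists_mem_ne
        (by omega : 1 < ((e.powersetCard 2).filter (fun p => BluePair H p)).card)
        ({u, v} : Finset (Fin n))
      rw [Finset.mem_filter] at hp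
      obtain ⟨hpmem, hpblue⟩ := hp
      rw [Finset.mem_powersetCard] at hpmem
      obtain ⟨hpsub, hpcard⟩ := hpmem
      have hcases := pair_cases (hex ▸ hpsub) hpcard hpne
      have hblue' : 1 < (H.filter (fun h => p ⊆ h)).card := by
        have := hpblue
        unfold BluePair at this
        omega
      obtain ⟨s, hs, hsne⟩ := Finset.exists_mem_ne hblue' e
      rw [Finset.mem_filter] at hs
      rcases hcases with hpu | hpv
      · refine ⟨x, true, s, fun _ => ⟨hxu, hxv, hex, hs.1, hsne, ?_⟩⟩
        simp only [if_true]
        rw [← hpu]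
        exact hs.2
      · refine ⟨x, false, s, fun _ => ⟨hxu, hxv, hex, hs.1, hsne, ?_⟩⟩
        simp only [if_false, Bool.false_eq_true]
        rw [← hpv]
        exact hs.2
    · exact ⟨u, true, ∅, fun h => absurd h he⟩
  choose xf bf sf hkey using key
  have hxval : ∀ e ∈ S, xf e ≠ u ∧ xf e ≠ v ∧ e = {u, v, xf e} := fun e he =>
    ⟨(hkey e he).1, (hkey e he).2.1, (hkey e he).2.2.1⟩
  have hsval : ∀ e ∈ S, sf e ∈ H ∧ sf e ≠ e ∧
      ({(if bf e then u else v), xf e} : Finset (Fin n)) ⊆ sf e := fun e he =>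
    ⟨(hkey e he).2.2.2.1, (hkey e he).2.2.2.2.1, (hkey e he).2.2.2.2.2⟩
  have hxnew : ∀ e ∈ S, xf e ≠ u ∧ xf e ≠ v := fun e he =>
    ⟨(hxval e he).1, (hxval e he).2.1⟩
  have hxinj : ∀ e ∈ S, ∀ e' ∈ S, xf e = xf e' → e = e' := by
    intro e he e' he' h
    rw [(hxval e he).2.2, (hxval e' he').2.2, h]
  have hwmem : ∀ e ∈ S, (if bf e then u else v) ∈ sf e := by
    intro e he
    exact (hsval e he).2.2 (Finset.mem_insert_self _ _)
  have hxmem : ∀ e ∈ S, xf e ∈ sf e := by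
    intro e he
    exact (hsval e he).2.2 (by simp)
  -- fibers of e ↦ (bf e, sf e) have at most 2 elements
  have hfib : ∀ q ∈ S.image (fun e => (bf e, sf e)),
      (S.filter (fun e => (bf e, sf e) = q)).card ≤ 2 := by
    intro q _
    by_contra hgt
    push_neg at hgt
    obtain ⟨e1, h1, e2, h2, e3, h3, h12, h13, h23⟩ := Finset.two_lt_card.1 hgt
    rw [Finset.mem_filter] at h1 h2 h3
    have h21 : (bf e2, sf e2) = (bf e1, sf e1) := h2.2.trans h1.2.symm
    have h31 : (bf e3, sf e3) = (bf e1, sf e1) := h3.2.trans h1.2.symm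
    rw [Prod.mk.injEq] at h21 h31
    set w := (if bf e1 then u else v) with hwdef
    have hwuv : w = u ∨ w = v := by
      rw [hwdef]; split
      · exact Or.inl rfl
      · exact Or.inr rfl
    have hxw : ∀ e ∈ S, xf e ≠ w := by
      intro e he
      rcases hwuv with h | h
      · rw [h]; exact (hxnew e he).1
      · rw [h]; exact (hxnew e he).2
    have hw1 : w ∈ sf e1 := hwmem e1 h1.1
    have hx1 : xf e1 ∈ sf e1 := hxmem e1 h1.1
    have hx2 : xf e2 ∈ sf e1 := h21.2 ▸ hxmem e2 h2.1
    have hx3 : xf e3 ∈ sf e1 := h31.2 ▸ hxmem e3 h3.1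
    have hx12 : xf e1 ≠ xf e2 := fun h => h12 (hxinj e1 h1.1 e2 h2.1 h)
    have hx13 : xf e1 ≠ xf e3 := fun h => h13 (hxinj e1 h1.1 e3 h3.1 h)
    have hx23 : xf e2 ≠ xf e3 := fun h => h23 (hxinj e2 h2.1 e3 h3.1 h)
    have hsub : ({w, xf e1, xf e2, xf e3} : Finset (Fin n)) ⊆ sf e1 := by
      intro a ha
      simp only [Finset.mem_insert, Finset.mem_singleton] at ha
      rcases ha with rfl | rfl | rfl | rfl <;> assumption
    have hc4 : ({w, xf e1, xf e2, xf e3} : Finset (Fin n)).card = 4 := by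
      rw [Finset.card_insert_of_notMem (by
          simp [Ne.symm (hxw e1 h1.1), Ne.symm (hxw e2 h2.1), Ne.symm (hxw e3 h3.1)]),
        Finset.card_insert_of_notMem (by simp [hx12, hx13]),
        Finset.card_insert_of_notMem (by simp [hx23]),
        Finset.card_singleton]
    have hle := Finset.card_le_card hsub
    rw [hc4, hunif _ (hsval e1 h1.1).1] at hle
    omega
  have himg : k ≤ (S.image (fun e => (bf e, sf e))).card := by
    have h2 := Finset.card_le_mul_card_image (f := fun e => (bf e, sf e)) S 2 hfib
    omega
  obtain ⟨I, hIsub, hIcard⟩ := Finset.exists_subset_card_eq himg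
  have hrep : ∀ q : Bool × Finset (Fin n), ∃ e, q ∈ I → e ∈ S ∧ (bf e, sf e) = q := by
    intro q
    by_cases hq : q ∈ I
    · obtain ⟨e, he, heq⟩ := Finset.mem_image.1 (hIsub hq)
      exact ⟨e, fun _ => ⟨he, heq⟩⟩
    · exact ⟨∅, fun h => absurd h hq⟩
  choose rep hrepspec using hrep
  let eqv : I ≃ Fin k := Finset.equivFinOfCardEq hIcard
  set E : Fin k → Finset (Fin n) := fun i => rep ((eqv.symm i) : Bool × Finset (Fin n)) with hE
  have hES : ∀ i, E i ∈ S := fun i => (hrepspec _ (eqv.symm i).2).1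
  have hEq : ∀ i, (bf (E i), sf (E i)) = ((eqv.symm i) : Bool × Finset (Fin n)) :=
    fun i => (hrepspec _ (eqv.symm i).2).2
  have hpairne : ∀ i j, (bf (E i), sf (E i)) = (bf (E j), sf (E j)) → i = j := by
    intro i j h
    have h2 : ((eqv.symm i) : Bool × Finset (Fin n)) = ((eqv.symm j) : Bool × Finset (Fin n)) := by
      rw [← hEq i, ← hEq j]; exact h
    exact eqv.symm.injective (Subtype.ext h2)
  have hEinj : Function.Injective E := by
    intro i j h
    exact hpairne i j (by rw [h])
  have hxidx : ∀ i j, xf (E i) = xf (E j) → i = j := fun i j h =>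
    hEinj (hxinj _ (hES i) _ (hES j) h)
  -- the spare base edge
  have hTle : (Finset.image E Finset.univ).card ≤ k :=
    le_trans Finset.card_image_le (by simp)
  have hne : (S \ Finset.image E Finset.univ).Nonempty := by
    rw [← Finset.card_pos]
    have h1 := Finset.le_card_sdiff (Finset.image E Finset.univ) S
    omega
  obtain ⟨e₀, he₀⟩ := hne
  rw [Finset.mem_sdiff] at he₀
  obtain ⟨he₀S, he₀T⟩ := he₀
  have he₀ne : ∀ i, e₀ ≠ E i := by
    intro i h
    exact he₀T (Finset.mem_image.2 ⟨i, Finset.mem_univ i, h.symm⟩)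
  -- s-edges never equal any E j
  have hsnotE : ∀ i j, sf (E i) ≠ E j := by
    intro i j h
    have hx := hxmem _ (hES i)
    rw [h, (hxval _ (hES j)).2.2] at hx
    simp only [Finset.mem_insert, Finset.mem_singleton] at hx
    rcases hx with h1 | h1 | h1
    · exact (hxnew _ (hES i)).1 h1
    · exact (hxnew _ (hES i)).2 h1
    · have h2 := hxidx i j h1
      subst h2
      exact (hsval _ (hES i)).2.1 h
  have he₀s : ∀ i, e₀ ≠ sf (E i) := by
    intro i h
    have hx := hxmem _ (hES i)
    rw [← h, (hxval _ he₀S).2.2] at hx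
    simp only [Finset.mem_insert, Finset.mem_singleton] at hx
    rcases hx with h1 | h1 | h1
    · exact (hxnew _ (hES i)).1 h1
    · exact (hxnew _ (hES i)).2 h1
    · exact he₀ne i (hxinj _ he₀S _ (hES i) h1.symm)
  -- s-edges of different sides are different
  have hsdiffb : ∀ i j, bf (E i) = true → bf (E j) = false → sf (E i) ≠ sf (E j) := by
    intro i j hbi hbj h
    have hui : u ∈ sf (E i) := by
      have hh := hwmem _ (hES i); rwa [hbi, if_pos rfl] at hh
    have hvj : v ∈ sf (E j) := by
      have hh := hwmem _ (hES j); rw [hbj] at hh; simpa using hh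
    have hxi : xf (E i) ∈ sf (E j) := h ▸ hxmem _ (hES i)
    have hxj : xf (E j) ∈ sf (E j) := hxmem _ (hES j)
    have hui' : u ∈ sf (E j) := h ▸ hui
    by_cases hxx : xf (E i) = xf (E j)
    · have h2 := hxidx i j hxx
      subst h2
      rw [hbi] at hbj
      exact absurd hbj (by simp)
    · have hsub : ({u, v, xf (E i), xf (E j)} : Finset (Fin n)) ⊆ sf (E j) := by
        intro a ha
        simp only [Finset.mem_insert, Finset.mem_singleton] at ha
        rcases ha with rfl | rfl | rfl | rfl <;> assumption
      have hc4 : ({u, v, xf (E i), xf (E j)} : Finset (Fin n)).card = 4 := by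
        rw [Finset.card_insert_of_notMem (by
            simp [huv, Ne.symm (hxnew _ (hES i)).1, Ne.symm (hxnew _ (hES j)).1]),
          Finset.card_insert_of_notMem (by
            simp [Ne.symm (hxnew _ (hES i)).2, Ne.symm (hxnew _ (hES j)).2]),
          Finset.card_insert_of_notMem (by simp [hxx]),
          Finset.card_singleton]
      have hle := Finset.card_le_card hsub
      rw [hc4, hunif _ (hsval _ (hES j)).1] at hle
      omega
  have hxEi : ∀ i, xf (E i) ∈ E i := by
    intro i
    have h : xf (E i) ∈ ({u, v, xf (E i)} : Finset (Fin n)) := by simp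
    rwa [← (hxval _ (hES i)).2.2] at h
  refine ⟨u, v, fun i => xf (E i), e₀,
    (fun i => if bf (E i) then sf (E i) else E i),
    (fun i => if bf (E i) then E i else sf (E i)),
    huv, fun i j h => hxidx i j h, fun i => hxnew _ (hES i),
    (hmem e₀ he₀S).1, (hmem e₀ he₀S).2.1, (hmem e₀ he₀S).2.2.1, ?_, ?_, ?_, ?_, ?_⟩
  · -- triangle conditions
    intro i
    have hsv := hsval _ (hES i)
    have heH := (hmem _ (hES i)).1
    have hu' := (hmem _ (hES i)).2.1
    have hv' := (hmem _ (hES i)).2.2.1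
    cases hb : bf (E i)
    · simp only [hb, Bool.false_eq_true, if_false]
      have hws := hsv.2.2
      rw [hb] at hws
      simp only [Bool.false_eq_true, if_false] at hws
      exact ⟨heH, hsv.1, hu', hxEi i, hws (Finset.mem_insert_self _ _), hws (by simp)⟩
    · simp only [hb, if_true]
      have hws := hsv.2.2
      rw [hb] at hws
      simp only [if_true] at hws
      exact ⟨hsv.1, heH, hws (Finset.mem_insert_self _ _), hws (by simp), hv', hxEi i⟩
  · -- f injective
    intro i j h
    simp only at h
    cases hbi : bf (E i) <;> cases hbj : bf (E j) <;>
      rw [hbi, hbj] at h <;> simp only [Bool.false_eq_true, if_false, if_true] at h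
    · exact hEinj h
    · exact absurd h.symm (hsnotE j i)
    · exact absurd h (hsnotE i j)
    · exact hpairne i j (by rw [hbi, hbj, h])
  · -- g injective
    intro i j h
    simp only at h
    cases hbi : bf (E i) <;> cases hbj : bf (E j) <;>
      rw [hbi, hbj] at h <;> simp only [Bool.false_eq_true, if_false, if_true] at h
    · exact hpairne i j (by rw [hbi, hbj, h])
    · exact absurd h (hsnotE i j)
    · exact absurd h.symm (hsnotE j i)
    · exact hEinj h
  · -- f i ≠ g j
    intro i j
    simp only
    cases hbi : bf (E i) <;> cases hbj : bf (E j) <;>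
      simp only [hbi, hbj, Bool.false_eq_true, if_false, if_true]
    · intro h; exact (hsnotE j i) h.symm
    · intro h
      have h2 := hEinj h
      subst h2
      rw [hbi] at hbj
      exact absurd hbj (by simp)
    · exact hsdiffb i j hbi hbj
    · exact hsnotE i j
  · -- e₀ distinct
    intro i
    cases hbi : bf (E i) <;> simp only [hbi, Bool.false_eq_true, if_false, if_true]
    · exact ⟨he₀ne i, he₀s i⟩
    · exact ⟨he₀s i, he₀ne i⟩
end

section
/- Let H be a 3-uniform hypergraph in which every pair of vertices lies in at most d hyperedges. Then H contains a subhypergraph H' that is linear (any two hyperedges share at most one vertex) with at least e(H)/(3d−2) hyperedges. -/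
/-- If every pair of vertices lies in at most `d` hyperedges of a 3-uniform
hypergraph `H`, then `H` has a linear subhypergraph with at least `e(H)/(3d-2)`
hyperedges. -/
theorem linear_subhypergraph (n d : ℕ) (H : Finset (Finset (Fin n)))
    (hunif : ∀ e ∈ H, e.card = 3)
    (hdeg : ∀ u v : Fin n, u ≠ v →
      (H.filter (fun e => u ∈ e ∧ v ∈ e)).card ≤ d) :
    ∃ H' ⊆ H, (∀ e ∈ H', ∀ f ∈ H', e ≠ f → (e ∩ f).card ≤ 1) ∧
      (H.card : ℝ) / (3 * (d : ℝ) - 2) ≤ (H'.card : ℝ) := by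
  classical
  -- trivial case: H empty
  rcases H.eq_empty_or_nonempty with hE | hNE
  · exact ⟨∅, by simp [hE]⟩
  -- d ≥ 1
  have hd1 : 1 ≤ d := by
    obtain ⟨e, he⟩ := hNE
    have hc := hunif e he
    obtain ⟨a, b, c, hab, hac, hbc, rfl⟩ := Finset.card_eq_three.mp hc
    have h1 : 1 ≤ (H.filter (fun e => a ∈ e ∧ b ∈ e)).card := by
      refine Finset.card_pos.mpr ⟨{a,b,c}, ?_⟩
      simp [Finset.mem_filter, he]
    exact le_trans h1 (hdeg a b hab)
  -- pick maximal linear subfamily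
  set S : Finset (Finset (Finset (Fin n))) :=
    (H.powerset).filter (fun A => ∀ e ∈ A, ∀ f ∈ A, e ≠ f → (e ∩ f).card ≤ 1) with hS
  have hSne : S.Nonempty := ⟨∅, by simp [hS]⟩
  obtain ⟨A, hAS, hAmax⟩ := S.exists_max_image Finset.card hSne
  have hAsub : A ⊆ H := Finset.mem_powerset.mp (Finset.mem_filter.mp hAS).1
  have hAlin : ∀ e ∈ A, ∀ f ∈ A, e ≠ f → (e ∩ f).card ≤ 1 :=
    (Finset.mem_filter.mp hAS).2
  refine ⟨A, hAsub, hAlin, ?_⟩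
  -- every edge of H meets some f ∈ A in ≥ 2 vertices
  have hcover : ∀ e ∈ H, ∃ f ∈ A, 2 ≤ (e ∩ f).card := by
    intro e he
    by_cases heA : e ∈ A
    · exact ⟨e, heA, by simp [hunif e he]⟩
    · by_contra hcon
      push_neg at hcon
      have hA' : insert e A ∈ S := by
        rw [hS, Finset.mem_filter, Finset.mem_powerset]
        constructor
        · exact Finset.insert_subset he hAsub
        · intro x hx y hy hxy
          rcases Finset.mem_insert.mp hx with hxe | hx' <;>
            rcases Finset.mem_insert.mp hy with hye | hy'
          · exact absurd (hxe.trans hye.symm) hxy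
          · subst hxe; have := hcon y hy'; omega
          · subst hye
            have := hcon x hx'
            rw [Finset.inter_comm]; omega
          · exact hAlin x hx' y hy' hxy
      have := hAmax _ hA'
      rw [Finset.card_insert_of_notMem heA] at this
      omega
  -- H is covered by the biUnion
  have hsub : H ⊆ A.biUnion (fun f => H.filter (fun e => 2 ≤ (e ∩ f).card)) := by
    intro e he
    obtain ⟨f, hf, h2⟩ := hcover e he
    exact Finset.mem_biUnion.mpr ⟨f, hf, Finset.mem_filter.mpr ⟨he, h2⟩⟩
  -- each piece has card ≤ 3d - 2
  have hpiece : ∀ f ∈ A, (H.filter (fun e => 2 ≤ (e ∩ f).card)).card ≤ 3 * d - 2 := by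
    intro f hfA
    have hfH := hAsub hfA
    obtain ⟨a, b, c, hab, hac, hbc, rfl⟩ := Finset.card_eq_three.mp (hunif f hfH)
    set X := H.filter (fun e => a ∈ e ∧ b ∈ e) with hX
    set Y := H.filter (fun e => a ∈ e ∧ c ∈ e) with hY
    set Z := H.filter (fun e => b ∈ e ∧ c ∈ e) with hZ
    have hsub2 : H.filter (fun e => 2 ≤ (e ∩ ({a,b,c} : Finset (Fin n))).card)
        ⊆ X ∪ (Y.erase {a,b,c} ∪ Z.erase {a,b,c}) := by
      intro e he
      obtain ⟨heH, h2⟩ := Finset.mem_filter.mp he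
      obtain ⟨x, hx, y, hy, hxy⟩ := Finset.one_lt_card.mp h2
      obtain ⟨hxe, hxf⟩ := Finset.mem_inter.mp hx
      obtain ⟨hye, hyf⟩ := Finset.mem_inter.mp hy
      simp only [Finset.mem_insert, Finset.mem_singleton] at hxf hyf
      by_cases heF : e = {a, b, c}
      · apply Finset.mem_union_left
        rw [hX, Finset.mem_filter]
        exact ⟨heH, by simp [heF]⟩
      · have hmem : (a ∈ e ∧ b ∈ e) ∨ (a ∈ e ∧ c ∈ e) ∨ (b ∈ e ∧ c ∈ e) := by
          rcases hxf with rfl | rfl | rfl <;> rcases hyf with rfl | rfl | rfl <;> tauto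
        rcases hmem with h | h | h
        · exact Finset.mem_union_left _ (Finset.mem_filter.mpr ⟨heH, h⟩)
        · exact Finset.mem_union_right _ (Finset.mem_union_left _
            (Finset.mem_erase.mpr ⟨heF, Finset.mem_filter.mpr ⟨heH, h⟩⟩))
        · exact Finset.mem_union_right _ (Finset.mem_union_right _
            (Finset.mem_erase.mpr ⟨heF, Finset.mem_filter.mpr ⟨heH, h⟩⟩))
    have hXd : X.card ≤ d := hdeg a b hab
    have hfY : ({a,b,c} : Finset (Fin n)) ∈ Y := Finset.mem_filter.mpr ⟨hfH, by simp⟩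
    have hfZ : ({a,b,c} : Finset (Fin n)) ∈ Z := Finset.mem_filter.mpr ⟨hfH, by simp⟩
    have hYd : (Y.erase {a,b,c}).card ≤ d - 1 := by
      rw [Finset.card_erase_of_mem hfY]
      have h := hdeg a c hac
      rw [← hY] at h
      omega
    have hZd : (Z.erase {a,b,c}).card ≤ d - 1 := by
      rw [Finset.card_erase_of_mem hfZ]
      have h := hdeg b c hbc
      rw [← hZ] at h
      omega
    calc (H.filter (fun e => 2 ≤ (e ∩ ({a,b,c} : Finset (Fin n))).card)).card
        ≤ (X ∪ (Y.erase {a,b,c} ∪ Z.erase {a,b,c})).card := Finset.card_le_card hsub2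
      _ ≤ X.card + ((Y.erase {a,b,c}).card + (Z.erase {a,b,c}).card) :=
          le_trans (Finset.card_union_le _ _)
            (by exact Nat.add_le_add_left (Finset.card_union_le _ _) _)
      _ ≤ 3 * d - 2 := by omega
  -- count
  have hcount : H.card ≤ A.card * (3 * d - 2) := by
    calc H.card ≤ (A.biUnion (fun f => H.filter (fun e => 2 ≤ (e ∩ f).card))).card :=
          Finset.card_le_card hsub
      _ ≤ ∑ f ∈ A, (H.filter (fun e => 2 ≤ (e ∩ f).card)).card :=
          Finset.card_biUnion_le
      _ ≤ ∑ f ∈ A, (3 * d - 2) := Finset.sum_le_sum hpiece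
      _ = A.card * (3 * d - 2) := by rw [Finset.sum_const, smul_eq_mul]
  have hpos : (0 : ℝ) < 3 * (d : ℝ) - 2 := by
    have : (1 : ℝ) ≤ (d : ℝ) := by exact_mod_cast hd1
    linarith
  rw [div_le_iff₀ hpos]
  have : (H.card : ℝ) ≤ (A.card : ℝ) * ((3 * d - 2 : ℕ) : ℝ) := by
    exact_mod_cast hcount
  calc (H.card : ℝ) ≤ (A.card : ℝ) * ((3 * d - 2 : ℕ) : ℝ) := this
    _ ≤ (A.card : ℝ) * (3 * (d : ℝ) - 2) := by
        apply mul_le_mul_of_nonneg_left _ (by positivity)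
        push_cast [Nat.cast_sub (by omega : 2 ≤ 3 * d)]
        ring_nf
        · linarith
end

section
/- Let H be a linear 3-uniform hypergraph with no Berge k-book. Then H contains a linear subhypergraph H'' with no Berge triangle and at least e(H)/(3k−2) hyperedges. -/
/-!
Take a maximal Berge-triangle-free `F ⊆ H`. Every `e ∈ H \ F` closes a Berge triangle
with two edges `g ≠ c` of `F`, and so marks two distinct flags: pairs `(g, p)` with `p` a
2-subset of `g`, of which there are at most `3|F|`. A flag `(g, {u, v})` marked by `2k - 1` edges
yields a Berge `k`-book on `{u, v}`: by linearity the marking edges have distinct apexes `x ∉ g`,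
each joined to `u` and to `v` by edges of `H`; an edge through `u` (or `v`) contains at most two
apexes, so the "same edge" relation on apexes is a union of paths and even cycles and half of
the apexes have pairwise distinct such edges. Hence `2|H \ F| ≤ 3|F| · 2(k - 1)`, that is,
`|H| ≤ (3k - 2)|F|`.
-/

open Finset

theorem Finset.card_filter_or_add_one_le {α : Type*} [DecidableEq α] {S : Finset α}
    {P Q : α → Prop} [DecidablePred P] [DecidablePred Q] {s : α} (hs : s ∈ S) (hP : P s)
    (hQ : Q s) : #{y ∈ S | P y ∨ Q y} + 1 ≤ #(S.filter P) + #(S.filter Q) := by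
  have := card_union_add_card_inter (S.filter P) (S.filter Q)
  have : 0 < #(S.filter P ∩ S.filter Q) := card_pos.2 ⟨s, by simp [hs, hP, hQ]⟩
  rw [filter_or]
  omega

theorem Finset.even_card_of_card_fiber_eq_two {α β : Type*} [DecidableEq β] {S : Finset α}
    {A : α → β} (hA : ∀ x ∈ S, #{y ∈ S | A y = A x} = 2) : Even #S := by
  rw [card_eq_sum_card_fiberwise (fun x hx => mem_image_of_mem A hx)]
  refine even_sum _ fun b hb => ?_
  obtain ⟨x, hx, rfl⟩ := mem_image.1 hb
  rw [hA x hx]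
  exact even_two

theorem Finset.exists_subset_injOn_injOn_of_card_fiber_le_two {α β γ : Type*}
    [DecidableEq β] [DecidableEq γ] (S : Finset α) (A : α → β) (B : α → γ)
    (hA : ∀ x ∈ S, #{y ∈ S | A y = A x} ≤ 2) (hB : ∀ x ∈ S, #{y ∈ S | B y = B x} ≤ 2) :
    ∃ T ⊆ S, #S ≤ 2 * #T ∧ Set.InjOn A T ∧ Set.InjOn B T := by
  classical
  induction S using Finset.strongInduction with
  | H S ih =>
  have step : ∀ s ∈ S, ∃ T ⊆ S, #S + 2 ≤ 2 * #T + #{y ∈ S | A y = A s ∨ B y = B s} ∧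
      Set.InjOn A T ∧ Set.InjOn B T := by
    intro s hs
    set N := {y ∈ S | A y = A s ∨ B y = B s}
    have hsN : s ∈ N := mem_filter.2 ⟨hs, Or.inl rfl⟩
    have hNS : N ⊆ S := filter_subset _ _
    obtain ⟨T, hT, hcard, hTA, hTB⟩ := ih (S \ N) (sdiff_ssubset hNS ⟨s, hsN⟩)
      (fun x hx => (card_le_card (filter_subset_filter _ sdiff_subset)).trans
        (hA x (sdiff_subset hx)))
      (fun x hx => (card_le_card (filter_subset_filter _ sdiff_subset)).trans
        (hB x (sdiff_subset hx)))
    have hmate : ∀ y ∈ T, A y ≠ A s ∧ B y ≠ B s := fun y hy => by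
      have := mem_sdiff.1 (hT hy)
      simp only [N, mem_filter, not_and, not_or] at this
      exact this.2 this.1
    have hsT : s ∉ T := fun h => (hmate s h).1 rfl
    refine ⟨insert s T, insert_subset hs (hT.trans sdiff_subset), ?_, ?_, ?_⟩
    · rw [card_insert_of_notMem hsT]
      have := card_sdiff_add_card_eq_card hNS
      omega
    · rw [coe_insert, Set.injOn_insert hsT]
      exact ⟨hTA, fun ⟨y, hy, h⟩ => (hmate y hy).1 h⟩
    · rw [coe_insert, Set.injOn_insert hsT]
      exact ⟨hTB, fun ⟨y, hy, h⟩ => (hmate y hy).2 h⟩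
  have hmates : ∀ s ∈ S, #{y ∈ S | A y = A s ∨ B y = B s} + 1 ≤
      #{y ∈ S | A y = A s} + #{y ∈ S | B y = B s} := fun s hs =>
    card_filter_or_add_one_le hs rfl rfl
  rcases S.eq_empty_or_nonempty with rfl | ⟨s₀, hs₀⟩
  · exact ⟨∅, subset_refl _, by simp, by simp, by simp⟩
  by_cases hsmall : ∃ s ∈ S, #{y ∈ S | A y = A s ∨ B y = B s} ≤ 2
  · obtain ⟨s, hs, h2⟩ := hsmall
    obtain ⟨T, hT, hcard, hTA, hTB⟩ := step s hs
    exact ⟨T, hT, by omega, hTA, hTB⟩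
  push Not at hsmall
  -- otherwise every `A`-fibre is a pair, so `#S` is even and losing three elements is affordable
  obtain ⟨m, hm⟩ : Even #S := even_card_of_card_fiber_eq_two (A := A) fun x hx => by
    have := hmates x hx
    have := hsmall x hx
    have := hA x hx
    have := hB x hx
    omega
  obtain ⟨T, hT, hcard, hTA, hTB⟩ := step s₀ hs₀
  refine ⟨T, hT, ?_, hTA, hTB⟩
  have := hmates s₀ hs₀
  have := hA s₀ hs₀
  have := hB s₀ hs₀
  omega

variable {V : Type*} [DecidableEq V] {H F : Finset (Finset V)} {e e' g p : Finset V}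
  {x : V}

def IsLinear (H : Finset (Finset V)) : Prop :=
  ∀ e ∈ H, ∀ f ∈ H, e ≠ f → #(e ∩ f) ≤ 1

theorem IsLinear.eq_of_mem_of_mem (hH : IsLinear H) {f : Finset V}
    (he : e ∈ H) (hf : f ∈ H) {y : V} (hxy : x ≠ y) (hxe : x ∈ e) (hye : y ∈ e) (hxf : x ∈ f)
    (hyf : y ∈ f) : e = f := by
  by_contra hef
  have hsub : #({x, y} : Finset V) ≤ #(e ∩ f) := card_le_card (by simp [insert_subset_iff, *])
  have := hH e he f hf hef
  rw [card_pair hxy] at hsub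
  omega

theorem exists_maximal_not_hasBergeTriangle (H : Finset (Finset V)) :
    ∃ F ⊆ H, ¬ HasBergeTriangle F ∧ ∀ e ∈ H, e ∉ F → HasBergeTriangle (insert e F) := by
  classical
  obtain ⟨F, hF, hmax⟩ := exists_max_image {F ∈ H.powerset | ¬ HasBergeTriangle F} card
    ⟨∅, by simp [HasBergeTriangle]⟩
  rw [mem_filter, mem_powerset] at hF
  refine ⟨F, hF.1, hF.2, fun e he heF => by_contra fun h => ?_⟩
  have := hmax (insert e F) (by simp [insert_subset_iff, he, hF.1, h])
  rw [card_insert_of_notMem heF] at this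
  omega

theorem exists_bergeTriangle_of_insert (hF : ¬ HasBergeTriangle F)
    (h : HasBergeTriangle (insert e F)) :
    ∃ x y z g c, x ≠ y ∧ y ≠ z ∧ x ≠ z ∧ g ≠ c ∧ g ∈ F ∧ c ∈ F ∧
      x ∈ e ∧ y ∈ e ∧ y ∈ g ∧ z ∈ g ∧ z ∈ c ∧ x ∈ c := by
  obtain ⟨v₁, v₂, v₃, h₁, h₂, h₃, h12, h23, h13, e12, e23, e13, m1, m2, m3,
    a1, a2, a3, a4, a5, a6⟩ := h
  rw [mem_insert] at m1 m2 m3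
  rcases m1 with rfl | m1
  · exact ⟨v₁, v₂, v₃, h₂, h₃, h12, h23, h13, e23, m2.resolve_left e12.symm,
      m3.resolve_left e13.symm, a1, a2, a3, a4, a5, a6⟩
  rcases m2 with rfl | m2
  · exact ⟨v₂, v₃, v₁, h₃, h₁, h23, h13.symm, h12.symm, e13.symm, m3.resolve_left e23.symm,
      m1, a3, a4, a5, a6, a1, a2⟩
  rcases m3 with rfl | m3
  · exact ⟨v₃, v₁, v₂, h₁, h₂, h13.symm, h12, h23.symm, e12, m1, m2, a5, a6, a1, a2, a3, a4⟩
  exact absurd ⟨v₁, v₂, v₃, h₁, h₂, h₃, h12, h23, h13, e12, e23, e13, m1, m2, m3,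
    a1, a2, a3, a4, a5, a6⟩ hF

/-- `x` is the vertex opposite to `g` in a Berge triangle formed by `e`, `g` and an edge `c ∈ F`,
whose side on `g` is `p`. -/
def IsApex (F : Finset (Finset V)) (e g p : Finset V) (x : V) : Prop :=
  ∃ y z c, p = {y, z} ∧ x ≠ y ∧ x ≠ z ∧ x ∈ e ∧ y ∈ e ∧ c ∈ F ∧ c ≠ g ∧ x ∈ c ∧ z ∈ c

theorem IsApex.notMem (hlin : IsLinear H) (hFH : F ⊆ H) (he : e ∈ H) (heF : e ∉ F)
    (hg : g ∈ F) (hpg : p ⊆ g) (h : IsApex F e g p x) : x ∉ g := by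
  obtain ⟨y, z, c, rfl, hxy, -, hxe, hye, -⟩ := h
  intro hxg
  have := hlin.eq_of_mem_of_mem he (hFH hg) hxy hxe hye hxg (hpg (mem_insert_self y {z}))
  exact heF (this ▸ hg)

theorem IsApex.exists_mem (hFH : F ⊆ H) (he : e ∈ H) (h : IsApex F e g p x) :
    ∀ w ∈ p, ∃ a ∈ H, w ∈ a ∧ x ∈ a := by
  obtain ⟨y, z, c, rfl, -, -, hxe, hye, hc, -, hxc, hzc⟩ := h
  intro w hw
  rcases mem_insert.1 hw with rfl | hw
  · exact ⟨e, he, hye, hxe⟩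
  · rw [mem_singleton.1 hw]
    exact ⟨c, hFH hc, hzc, hxc⟩

theorem IsApex.eq (hlin : IsLinear H) (hFH : F ⊆ H) (he : e ∈ H) (he' : e' ∈ H)
    (he'F : e' ∉ F) (h : IsApex F e g p x) (h' : IsApex F e' g p x) : e = e' := by
  obtain ⟨y, z, c, rfl, hxy, hxz, hxe, hye, hc, -, hxc, hzc⟩ := h
  obtain ⟨y', z', -, hp, -, -, hxe', hye', -⟩ := h'
  have hy' : y' ∈ ({y, z} : Finset V) := hp ▸ mem_insert_self _ _
  rcases mem_insert.1 hy' with rfl | hy'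
  · exact hlin.eq_of_mem_of_mem he he' hxy hxe hye hxe' hye'
  · rw [mem_singleton.1 hy'] at hye'
    exact absurd (hlin.eq_of_mem_of_mem he' (hFH hc) hxz hxe' hye' hxc hzc ▸ hc) he'F

theorem hasBergeBook_of_apexes (hH : ∀ e ∈ H, #e ≤ 3) (hlin : IsLinear H) (hg : g ∈ H)
    {u v : V} (huv : u ≠ v) (hu : u ∈ g) (hv : v ∈ g) {X : Finset V} {k : ℕ} (hk : 2 * k ≤ #X + 1)
    (hX : ∀ x ∈ X, x ∉ g ∧ (∃ a ∈ H, u ∈ a ∧ x ∈ a) ∧ ∃ b ∈ H, v ∈ b ∧ x ∈ b) :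
    HasBergeBook H k := by
  choose! A hAH huA hxA using fun x hx => (hX x hx).2.1
  choose! B hBH hvB hxB using fun x hx => (hX x hx).2.2
  have hfib : ∀ (C : V → Finset V) (w : V), w ∈ g →
      (∀ x ∈ X, C x ∈ H ∧ w ∈ C x ∧ x ∈ C x) → ∀ x ∈ X, #{y ∈ X | C y = C x} ≤ 2 := by
    intro C w hw hC x hx
    have hsub : {y ∈ X | C y = C x} ⊆ (C x).erase w := fun y hy => by
      obtain ⟨hyX, hCy⟩ := mem_filter.1 hy
      exact mem_erase.2 ⟨(ne_of_mem_of_not_mem hw (hX y hyX).1).symm, hCy ▸ (hC y hyX).2.2⟩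
    have := card_le_card hsub
    rw [card_erase_of_mem (hC x hx).2.1] at this
    have := hH _ (hC x hx).1
    omega
  have hAB : ∀ x ∈ X, ∀ y ∈ X, A x ≠ B y := fun x hx y hy h => by
    have := hlin.eq_of_mem_of_mem (hAH x hx) hg huv (huA x hx) (h ▸ hvB y hy) hu hv
    exact (hX x hx).1 (this ▸ hxA x hx)
  obtain ⟨T, hTX, hXT, hTA, hTB⟩ := exists_subset_injOn_injOn_of_card_fiber_le_two X A B
    (hfib A u hu fun x hx => ⟨hAH x hx, huA x hx, hxA x hx⟩)
    (hfib B v hv fun x hx => ⟨hBH x hx, hvB x hx, hxB x hx⟩)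
  let x : Fin k ↪ V := (Fin.castLEEmb (by omega : k ≤ #T)).trans
    (T.equivFin.symm.toEmbedding.trans (Function.Embedding.subtype _))
  have hxT : ∀ i, x i ∈ T := fun i => (T.equivFin.symm _).2
  have hxX : ∀ i, x i ∈ X := fun i => hTX (hxT i)
  have hxg : ∀ i, x i ∉ g := fun i => (hX _ (hxX i)).1
  refine ⟨u, v, x, g, A ∘ x, B ∘ x, huv, x.injective,
    fun i => ⟨(ne_of_mem_of_not_mem hu (hxg i)).symm, (ne_of_mem_of_not_mem hv (hxg i)).symm⟩,
    hg, hu, hv, fun i => ⟨hAH _ (hxX i), hBH _ (hxX i), huA _ (hxX i), hxA _ (hxX i),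
      hvB _ (hxX i), hxB _ (hxX i)⟩,
    fun i j h => x.injective (hTA (hxT i) (hxT j) h),
    fun i j h => x.injective (hTB (hxT i) (hxT j) h),
    fun i j => hAB _ (hxX i) _ (hxX j),
    fun i => ⟨(ne_of_mem_of_not_mem' (hxA _ (hxX i)) (hxg i)).symm,
      (ne_of_mem_of_not_mem' (hxB _ (hxX i)) (hxg i)).symm⟩⟩

open Classical in
theorem card_filter_isApex_add_two_le (hH : ∀ e ∈ H, #e ≤ 3) (hlin : IsLinear H)
    (hFH : F ⊆ H) (hg : g ∈ F) (hpg : p ⊆ g) (hp : #p = 2) {k : ℕ} (hbook : ¬ HasBergeBook H k) :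
    #{e ∈ H \ F | ∃ x, IsApex F e g p x} + 2 ≤ 2 * k := by
  obtain ⟨u, v, huv, rfl⟩ := card_eq_two.1 hp
  set S := {e ∈ H \ F | ∃ x, IsApex F e g {u, v} x}
  have hS : ∀ e ∈ S, e ∈ H ∧ e ∉ F ∧ ∃ x, IsApex F e g {u, v} x := fun e he => by
    simpa only [S, mem_filter, mem_sdiff, and_assoc] using he
  have : Nonempty V := ⟨u⟩
  choose! apex hapex using fun e he => (hS e he).2.2
  have hinj : Set.InjOn apex S := fun e he e' he' h =>
    (hapex e he).eq hlin hFH (hS e he).1 (hS e' he').1 (hS e' he').2.1 (h ▸ hapex e' he')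
  by_contra hlt
  refine hbook (hasBergeBook_of_apexes hH hlin (hFH hg) huv (hpg (by simp)) (hpg (by simp))
    (X := S.image apex) (by rw [card_image_of_injOn hinj]; omega) ?_)
  simp only [mem_image, forall_exists_index, and_imp]
  rintro _ e he rfl
  have hw := (hapex e he).exists_mem hFH (hS e he).1
  exact ⟨(hapex e he).notMem hlin hFH (hS e he).1 (hS e he).2.1 hg hpg,
    hw u (by simp), hw v (by simp)⟩

theorem card_sdiff_le_of_maximal_not_hasBergeTriangle (hH : ∀ e ∈ H, #e ≤ 3)
    (hlin : IsLinear H) (hFH : F ⊆ H) (hF : ¬ HasBergeTriangle F)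
    (hmax : ∀ e ∈ H, e ∉ F → HasBergeTriangle (insert e F)) {k : ℕ}
    (hbook : ¬ HasBergeBook H k) :
    #(H \ F) ≤ 3 * (k - 1) * #F := by
  classical
  set flags := F.sigma fun g => g.powersetCard 2
  have hflags : #flags ≤ 3 * #F := by
    rw [card_sigma, mul_comm, ← smul_eq_mul]
    refine sum_le_card_nsmul _ _ _ fun g hg => ?_
    rw [card_powersetCard]
    exact Nat.choose_le_choose 2 (hH g (hFH hg))
  let r e (t : Σ _ : Finset V, Finset V) := ∃ x, IsApex F e t.1 t.2 x
  have hcount := card_mul_le_card_mul r (s := H \ F) (t := flags) (m := 2) (n := 2 * (k - 1))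
    ?_ ?_
  · have := Nat.mul_le_mul_right (2 * (k - 1)) hflags
    nlinarith
  · intro e he
    obtain ⟨he, heF⟩ := mem_sdiff.1 he
    obtain ⟨x, y, z, g, c, hxy, hyz, hxz, hgc, hg, hc, hxe, hye, hyg, hzg, hzc, hxc⟩ :=
      exists_bergeTriangle_of_insert hF (hmax e he heF)
    have hsub : ({⟨g, {y, z}⟩, ⟨c, {x, z}⟩} : Finset (Σ _ : Finset V, Finset V)) ⊆
        flags.bipartiteAbove r e := by
      intro t ht
      simp only [mem_insert, mem_singleton] at ht
      rw [mem_bipartiteAbove, mem_sigma, mem_powersetCard]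
      rcases ht with rfl | rfl
      · exact ⟨⟨hg, insert_subset hyg (singleton_subset_iff.2 hzg), card_pair hyz⟩,
          x, y, z, c, rfl, hxy, hxz, hxe, hye, hc, hgc.symm, hxc, hzc⟩
      · exact ⟨⟨hc, insert_subset hxc (singleton_subset_iff.2 hzc), card_pair hxz⟩,
          y, x, z, g, rfl, hxy.symm, hyz, hye, hxe, hg, hgc, hyg, hzg⟩
    calc 2 = #({⟨g, {y, z}⟩, ⟨c, {x, z}⟩} : Finset (Σ _ : Finset V, Finset V)) :=
          (card_pair fun h => hgc (congrArg Sigma.fst h)).symm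
      _ ≤ _ := card_le_card hsub
  · rintro ⟨g, p⟩ ht
    obtain ⟨hg, hpg, hp⟩ : g ∈ F ∧ p ⊆ g ∧ #p = 2 := by simpa [flags] using ht
    have := card_filter_isApex_add_two_le hH hlin hFH hg hpg hp hbook
    dsimp only [bipartiteBelow, r]
    omega

/-- A linear Berge-`k`-book-free 3-uniform hypergraph contains a linear
Berge-triangle-free subhypergraph with at least `e(H)/(3k-2)` hyperedges. -/
theorem triangle_free_subhypergraph (n k : ℕ) (H : Finset (Finset (Fin n)))
    (hunif : ∀ e ∈ H, e.card = 3)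
    (hlin : ∀ e ∈ H, ∀ f ∈ H, e ≠ f → (e ∩ f).card ≤ 1)
    (hfree : ¬ HasBergeBook H k) :
    ∃ H'' ⊆ H, (∀ e ∈ H'', ∀ f ∈ H'', e ≠ f → (e ∩ f).card ≤ 1) ∧
      ¬ HasBergeTriangle H'' ∧
      (H.card : ℝ) / (3 * (k : ℝ) - 2) ≤ (H''.card : ℝ) := by
  obtain ⟨F, hFH, hF, hmax⟩ := exists_maximal_not_hasBergeTriangle H
  refine ⟨F, hFH, fun e he f hf => hlin e (hFH he) f (hFH hf), hF, ?_⟩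
  rcases k.eq_zero_or_pos with rfl | hk
  · exact (div_nonpos_of_nonneg_of_nonpos (by positivity) (by norm_num)).trans (by positivity)
  have hR := card_sdiff_le_of_maximal_not_hasBergeTriangle (fun e he => (hunif e he).le) hlin
    hFH hF hmax hfree
  have hsplit := card_sdiff_add_card_eq_card hFH
  have hnat : #H ≤ 3 * (k - 1) * #F + #F := by omega
  have hk' : (1 : ℝ) ≤ k := by exact_mod_cast hk
  rw [div_le_iff₀ (by linarith)]
  have hreal : (#H : ℝ) ≤ 3 * ((k : ℝ) - 1) * #F + #F := by
    rw [← Nat.cast_pred hk]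
    exact_mod_cast hnat
  linarith
end

section
/- Let G be a graph on n vertices, n > 12k, containing a book of size n/6 (an edge uv lying in at least n/6 triangles), and let H be a 3-uniform hypergraph such that every edge of G is contained in exactly one hyperedge of H. Then H contains a Berge k-book. -/
open Finset

lemma two_matching_indep {α β : Type*} [DecidableEq α] [DecidableEq β] :
    ∀ (N : ℕ) (S : Finset α) (f g : α → β), S.card ≤ N →
    (∀ x ∈ S, (S.filter (fun t => f t = f x)).card ≤ 2) →
    (∀ x ∈ S, (S.filter (fun t => g t = g x)).card ≤ 2) →
    ∃ T, T ⊆ S ∧ S.card ≤ 2 * T.card ∧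
      (∀ a ∈ T, ∀ b ∈ T, f a = f b → a = b) ∧
      (∀ a ∈ T, ∀ b ∈ T, g a = g b → a = b) := by
  intro N
  induction N with
  | zero =>
    intro S f g hS _ _
    refine ⟨∅, empty_subset _, ?_, by simp, by simp⟩
    simpa using Nat.le_zero.mp hS
  | succ N ih =>
    intro S f g hS hf hg
    rcases S.eq_empty_or_nonempty with rfl | ⟨x₀, hx₀⟩
    · exact ⟨∅, empty_subset _, by simp, by simp, by simp⟩
    have step : ∀ x ∈ S, ∃ T, T ⊆ S ∧
        S.card + 1 ≤ 2 * T.card + (S.filter (fun t => f t = f x)).card ∧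
        (∀ a ∈ T, ∀ b ∈ T, f a = f b → a = b) ∧
        (∀ a ∈ T, ∀ b ∈ T, g a = g b → a = b) := by
      intro x hx
      set S₂ := S.filter (fun t => ¬ f t = f x ∧ ¬ g t = g x) with hS₂def
      have hS₂sub : S₂ ⊆ S := filter_subset _ _
      have hxS₂ : x ∉ S₂ := by simp [hS₂def]
      have hcard2 : S₂.card ≤ N := by
        have hsub : S₂ ⊆ S.erase x := fun t ht =>
          mem_erase.mpr ⟨fun h => hxS₂ (h ▸ ht), hS₂sub ht⟩
        have h1 := card_le_card hsub
        have h2 := card_erase_of_mem hx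
        have h3 : 1 ≤ S.card := card_pos.mpr ⟨x, hx⟩
        omega
      have hcover' : S ⊆ S₂ ∪ S.filter (fun t => f t = f x) ∪
          (S.filter (fun t => g t = g x)).erase x := by
        intro t ht
        by_cases h1 : f t = f x
        · exact mem_union_left _ (mem_union_right _ (mem_filter.mpr ⟨ht, h1⟩))
        by_cases h2 : g t = g x
        · refine mem_union_right _ (mem_erase.mpr ⟨?_, mem_filter.mpr ⟨ht, h2⟩⟩)
          rintro rfl; exact h1 rfl
        · exact mem_union_left _ (mem_union_left _ (mem_filter.mpr ⟨ht, h1, h2⟩))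
      have hxFg : x ∈ S.filter (fun t => g t = g x) := mem_filter.mpr ⟨hx, rfl⟩
      have herase : ((S.filter (fun t => g t = g x)).erase x).card ≤ 1 := by
        have h1 := card_erase_of_mem hxFg
        have h2 := hg x hx
        omega
      have hcard_le : S.card ≤ S₂.card + (S.filter (fun t => f t = f x)).card + 1 := by
        have h1 := card_le_card hcover'
        have h2 := card_union_le (S₂ ∪ S.filter (fun t => f t = f x))
          ((S.filter (fun t => g t = g x)).erase x)
        have h3 := card_union_le S₂ (S.filter (fun t => f t = f x))
        omega
      obtain ⟨T₂, hT₂sub, hT₂card, hT₂f, hT₂g⟩ := ih S₂ f g hcard2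
        (fun y hy => le_trans (card_le_card (filter_subset_filter _ hS₂sub)) (hf y (hS₂sub hy)))
        (fun y hy => le_trans (card_le_card (filter_subset_filter _ hS₂sub)) (hg y (hS₂sub hy)))
      have hxT₂ : x ∉ T₂ := fun h => hxS₂ (hT₂sub h)
      refine ⟨insert x T₂, insert_subset hx (hT₂sub.trans hS₂sub), ?_, ?_, ?_⟩
      · rw [card_insert_of_notMem hxT₂]; omega
      · intro a ha b hb hab
        rcases mem_insert.mp ha with rfl | ha' <;> rcases mem_insert.mp hb with rfl | hb'
        · rfl
        · exact absurd hab.symm (mem_filter.mp (hT₂sub hb')).2.1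
        · exact absurd hab (mem_filter.mp (hT₂sub ha')).2.1
        · exact hT₂f a ha' b hb' hab
      · intro a ha b hb hab
        rcases mem_insert.mp ha with rfl | ha' <;> rcases mem_insert.mp hb with rfl | hb'
        · rfl
        · exact absurd hab.symm (mem_filter.mp (hT₂sub hb')).2.2
        · exact absurd hab (mem_filter.mp (hT₂sub ha')).2.2
        · exact hT₂g a ha' b hb' hab
    by_cases hA : ∃ x ∈ S, (S.filter (fun t => f t = f x)).card ≤ 1
    · obtain ⟨x, hx, hle⟩ := hA
      obtain ⟨T, h1, h2, h3, h4⟩ := step x hx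
      exact ⟨T, h1, by omega, h3, h4⟩
    · push_neg at hA
      have heven : S.card = 2 * (S.image f).card := by
        have hterm : ∀ b ∈ S.image f, (S.filter (fun t => f t = b)).card = 2 := by
          intro b hb
          obtain ⟨y, hy, rfl⟩ := mem_image.mp hb
          exact le_antisymm (hf y hy) (hA y hy)
        rw [Finset.card_eq_sum_card_image f S, Finset.sum_congr rfl hterm,
          Finset.sum_const, smul_eq_mul]
        ring
      obtain ⟨T, h1, h2, h3, h4⟩ := step x₀ hx₀
      have h5 := hf x₀ hx₀
      exact ⟨T, h1, by omega, h3, h4⟩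



/-- If a graph `G` on `n > 12k` vertices contains a book of size `n/6` and every edge
of `G` lies in exactly one hyperedge of a 3-uniform hypergraph `H`, then `H`
contains a Berge `k`-book. -/
theorem book_from_red_graph (n k : ℕ) (hn : 12 * k < n)
    (G : SimpleGraph (Fin n)) [DecidableRel G.Adj]
    (hbook : ∃ u v : Fin n, G.Adj u v ∧
      (n : ℝ) / 6 ≤ (Finset.univ.filter (fun x => G.Adj u x ∧ G.Adj v x)).card)
    (H : Finset (Finset (Fin n))) (hunif : ∀ e ∈ H, e.card = 3)
    (hcover : ∀ a b : Fin n, G.Adj a b →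
      (H.filter (fun e => a ∈ e ∧ b ∈ e)).card = 1) :
    HasBergeBook H k := by
  classical
  obtain ⟨u, v, huv, hSbig⟩ := hbook
  set S : Finset (Fin n) := Finset.univ.filter (fun x => G.Adj u x ∧ G.Adj v x) with hSdef
  have hadj : ∀ x ∈ S, G.Adj u x ∧ G.Adj v x := fun x hx => (mem_filter.mp hx).2
  have hcard : 2 * k + 1 ≤ S.card := by
    have h1 : ((12 * k : ℕ) : ℝ) < (n : ℝ) := by exact_mod_cast hn
    have h2 : ((2 * k : ℕ) : ℝ) < (S.card : ℝ) := by push_cast at h1 ⊢; linarith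
    have h3 : 2 * k < S.card := by exact_mod_cast h2
    omega
  -- the base hyperedge
  obtain ⟨e₀, he₀⟩ := Finset.card_eq_one.mp (hcover u v huv)
  have he₀mem : e₀ ∈ H ∧ u ∈ e₀ ∧ v ∈ e₀ := by
    have h : e₀ ∈ H.filter (fun e => u ∈ e ∧ v ∈ e) := he₀ ▸ mem_singleton_self e₀
    simpa using h
  have huniq : ∀ e ∈ H, u ∈ e → v ∈ e → e = e₀ := by
    intro e he hu hv
    have h : e ∈ H.filter (fun e => u ∈ e ∧ v ∈ e) := mem_filter.mpr ⟨he, hu, hv⟩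
    rw [he₀] at h; exact mem_singleton.mp h
  -- choose covering hyperedges for the edges ux, vx
  have exF : ∀ x : Fin n, ∃ e, x ∈ S →
      e ∈ H ∧ u ∈ e ∧ x ∈ e ∧ ∀ e' ∈ H, u ∈ e' → x ∈ e' → e' = e := by
    intro x
    by_cases hx : x ∈ S
    · obtain ⟨e, he⟩ := Finset.card_eq_one.mp (hcover u x (hadj x hx).1)
      have hmem : e ∈ H.filter (fun e => u ∈ e ∧ x ∈ e) := he ▸ mem_singleton_self e
      rw [mem_filter] at hmem
      refine ⟨e, fun _ => ⟨hmem.1, hmem.2.1, hmem.2.2, fun e' he' hu' hx' => ?_⟩⟩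
      have h : e' ∈ H.filter (fun e => u ∈ e ∧ x ∈ e) := mem_filter.mpr ⟨he', hu', hx'⟩
      rw [he] at h; exact mem_singleton.mp h
    · exact ⟨∅, fun h => absurd h hx⟩
  choose F hF using exF
  have exGv : ∀ x : Fin n, ∃ e, x ∈ S →
      e ∈ H ∧ v ∈ e ∧ x ∈ e ∧ ∀ e' ∈ H, v ∈ e' → x ∈ e' → e' = e := by
    intro x
    by_cases hx : x ∈ S
    · obtain ⟨e, he⟩ := Finset.card_eq_one.mp (hcover v x (hadj x hx).2)
      have hmem : e ∈ H.filter (fun e => v ∈ e ∧ x ∈ e) := he ▸ mem_singleton_self e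
      rw [mem_filter] at hmem
      refine ⟨e, fun _ => ⟨hmem.1, hmem.2.1, hmem.2.2, fun e' he' hv' hx' => ?_⟩⟩
      have h : e' ∈ H.filter (fun e => v ∈ e ∧ x ∈ e) := mem_filter.mpr ⟨he', hv', hx'⟩
      rw [he] at h; exact mem_singleton.mp h
    · exact ⟨∅, fun h => absurd h hx⟩
  choose Gv hGv using exGv
  -- remove the at most one common neighbour lying in e₀
  set S' : Finset (Fin n) := S.filter (fun x => x ∉ e₀) with hS'def
  have hS'S : S' ⊆ S := filter_subset _ _
  have hS'card : 2 * k ≤ S'.card := by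
    have hsplit : (S.filter (fun x => x ∈ e₀)).card + S'.card = S.card :=
      Finset.card_filter_add_card_filter_not (s := S) (p := fun x => x ∈ e₀)
    have hsub : S.filter (fun x => x ∈ e₀) ⊆ e₀ \ {u, v} := by
      intro x hx
      obtain ⟨hxS, hxe⟩ := mem_filter.mp hx
      refine mem_sdiff.mpr ⟨hxe, ?_⟩
      simp only [mem_insert, mem_singleton]
      push_neg
      exact ⟨(hadj x hxS).1.ne', (hadj x hxS).2.ne'⟩
    have hcard1 : (e₀ \ {u, v}).card ≤ 1 := by
      have h1 : ({u, v} : Finset (Fin n)) ⊆ e₀ := by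
        intro z hz
        rcases mem_insert.mp hz with rfl | hz
        · exact he₀mem.2.1
        · exact (mem_singleton.mp hz) ▸ he₀mem.2.2
      have h2 : ({u, v} : Finset (Fin n)).card = 2 := by
        rw [card_insert_of_notMem (by simpa using huv.ne), card_singleton]
      rw [card_sdiff_of_subset h1, h2, hunif e₀ he₀mem.1]
    have := card_le_card hsub
    omega
  -- fiber bounds: each hyperedge serves as F-value (resp. Gv-value) of at most 2 vertices
  have hFx : ∀ x ∈ S', F x ∈ H ∧ u ∈ F x ∧ x ∈ F x := fun x hx =>
    ⟨(hF x (hS'S hx)).1, (hF x (hS'S hx)).2.1, (hF x (hS'S hx)).2.2.1⟩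
  have hGx : ∀ x ∈ S', Gv x ∈ H ∧ v ∈ Gv x ∧ x ∈ Gv x := fun x hx =>
    ⟨(hGv x (hS'S hx)).1, (hGv x (hS'S hx)).2.1, (hGv x (hS'S hx)).2.2.1⟩
  have hfibF : ∀ x ∈ S', (S'.filter (fun t => F t = F x)).card ≤ 2 := by
    intro x hx
    have hsub : S'.filter (fun t => F t = F x) ⊆ (F x).erase u := by
      intro t ht
      obtain ⟨htS', hteq⟩ := mem_filter.mp ht
      exact mem_erase.mpr ⟨(hadj t (hS'S htS')).1.ne', hteq ▸ (hFx t htS').2.2⟩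
    have h1 := card_le_card hsub
    have h2 : ((F x).erase u).card = 2 := by
      rw [card_erase_of_mem (hFx x hx).2.1, hunif _ (hFx x hx).1]
    omega
  have hfibG : ∀ x ∈ S', (S'.filter (fun t => Gv t = Gv x)).card ≤ 2 := by
    intro x hx
    have hsub : S'.filter (fun t => Gv t = Gv x) ⊆ (Gv x).erase v := by
      intro t ht
      obtain ⟨htS', hteq⟩ := mem_filter.mp ht
      exact mem_erase.mpr ⟨(hadj t (hS'S htS')).2.ne', hteq ▸ (hGx t htS').2.2⟩
    have h1 := card_le_card hsub
    have h2 : ((Gv x).erase v).card = 2 := by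
      rw [card_erase_of_mem (hGx x hx).2.1, hunif _ (hGx x hx).1]
    omega
  -- extract a subset on which both F and Gv are injective
  obtain ⟨T, hTsub, hTcard, hTf, hTg⟩ :=
    two_matching_indep S'.card S' F Gv le_rfl hfibF hfibG
  obtain ⟨T', hT'sub, hT'card⟩ := Finset.exists_subset_card_eq (s := T) (n := k) (by omega)
  let eqv := T'.orderIsoOfFin hT'card
  have hmemT : ∀ i : Fin k, (eqv i : Fin n) ∈ T := fun i => hT'sub (eqv i).2
  have hmemS' : ∀ i, (eqv i : Fin n) ∈ S' := fun i => hTsub (hmemT i)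
  have hne₀ : ∀ i, (eqv i : Fin n) ∉ e₀ := fun i => (mem_filter.mp (hmemS' i)).2
  have hmemS : ∀ i, (eqv i : Fin n) ∈ S := fun i => hS'S (hmemS' i)
  have hxinj : Function.Injective (fun i : Fin k => (eqv i : Fin n)) := by
    intro i j h
    exact eqv.injective (Subtype.ext h)
  refine ⟨u, v, fun i => (eqv i : Fin n), e₀, fun i => F (eqv i), fun i => Gv (eqv i),
    huv.ne, hxinj, ?_, he₀mem.1, he₀mem.2.1, he₀mem.2.2, ?_, ?_, ?_, ?_, ?_⟩
  · intro i
    exact ⟨(hadj _ (hmemS i)).1.ne', (hadj _ (hmemS i)).2.ne'⟩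
  · intro i
    exact ⟨(hF _ (hmemS i)).1, (hGv _ (hmemS i)).1, (hF _ (hmemS i)).2.1,
      (hF _ (hmemS i)).2.2.1, (hGv _ (hmemS i)).2.1, (hGv _ (hmemS i)).2.2.1⟩
  · intro i j h
    exact hxinj (hTf _ (hmemT i) _ (hmemT j) h)
  · intro i j h
    exact hxinj (hTg _ (hmemT i) _ (hmemT j) h)
  · intro i j h
    have h' : F (eqv i) = Gv (eqv j) := h
    have hv : v ∈ F (eqv i) := by rw [h']; exact (hGv _ (hmemS j)).2.1
    have he : F (eqv i) = e₀ := huniq _ (hF _ (hmemS i)).1 (hF _ (hmemS i)).2.1 hv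
    exact hne₀ i (by rw [← he]; exact (hF _ (hmemS i)).2.2.1)
  · intro i
    constructor
    · intro h
      have h' : e₀ = F (eqv i) := h
      exact hne₀ i (by rw [h']; exact (hF _ (hmemS i)).2.2.1)
    · intro h
      have h' : e₀ = Gv (eqv i) := h
      exact hne₀ i (by rw [h']; exact (hGv _ (hmemS i)).2.2.1)
end

section
/- Let H be a linear triangle-free 3-uniform hypergraph on n vertices (no Berge triangle, any two hyperedges share at most one vertex). Then for every ε > 0 there is n₀ such that for n > n₀, e(H) ≤ ε·n². -/
/-!
A triangle of the 2-shadow of a 3-uniform hypergraph either lies in a single hyperedge or is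
covered by three distinct hyperedges forming a Berge triangle. So for a linear, Berge-triangle-free
hypergraph the triangles of the shadow are exactly the hyperedges, and they are edge-disjoint.
Destroying all triangles then costs one edge per hyperedge, so more than `ε n²` hyperedges make the
shadow `ε`-far from triangle-free. The triangle removal lemma then yields `c(ε) n³` triangles,
while edge-disjointness allows at most `n²`; this is impossible once `n > 1 / c(ε)`.
-/

open Finset SimpleGraph Fintype

namespace SimpleGraph

variable {α : Type*} [Fintype α] [DecidableEq α] {G : SimpleGraph α} [DecidableRel G.Adj]

lemma EdgeDisjointTriangles.card_cliqueFinset_le_sq (hG : G.EdgeDisjointTriangles) :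
    #(G.cliqueFinset 3) ≤ card α ^ 2 := by
  have h₁ := hG.card_edgeFinset_le
  have h₂ := G.card_edgeFinset_le_card_choose_two
  have h₃ := (card α).choose_le_pow 2
  omega

theorem EdgeDisjointTriangles.card_cliqueFinset_le_mul_sq (hG : G.EdgeDisjointTriangles)
    {ε : ℝ} (hε : 0 < ε) (hcard : (triangleRemovalBound ε)⁻¹ < card α) :
    (#(G.cliqueFinset 3) : ℝ) ≤ ε * card α ^ 2 := by
  by_contra! hmany
  have hfar : G.FarFromTriangleFree ε := hG.farFromTriangleFree (by push_cast; exact hmany.le)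
  have hlower := hfar.le_card_cliqueFinset
  have hupper : (#(G.cliqueFinset 3) : ℝ) ≤ card α ^ 2 := mod_cast hG.card_cliqueFinset_le_sq
  have hc := triangleRemovalBound_pos hε
  have hcn : 1 < triangleRemovalBound ε * card α := by rwa [inv_lt_iff_one_lt_mul₀' hc] at hcard
  have hn : (0 : ℝ) < card α := (inv_pos.2 hc).trans hcard
  nlinarith [mul_pos hn hn]

end SimpleGraph

variable {V : Type*}

def shadowGraph (H : Finset (Finset V)) : SimpleGraph V where
  Adj x y := x ≠ y ∧ ∃ e ∈ H, x ∈ e ∧ y ∈ e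
  symm := ⟨fun _ _ ⟨hxy, e, he, hx, hy⟩ ↦ ⟨hxy.symm, e, he, hy, hx⟩⟩
  loopless := ⟨fun _ h ↦ h.1 rfl⟩

lemma isNClique_shadowGraph_of_mem {H : Finset (Finset V)} {e : Finset V} (he : e ∈ H) :
    (shadowGraph H).IsNClique e.card e :=
  ⟨fun _ hx _ hy hxy ↦ ⟨hxy, e, he, hx, hy⟩, rfl⟩

variable [DecidableEq V]

lemma mem_of_isNClique_three_shadowGraph {H : Finset (Finset V)} (h3 : ∀ e ∈ H, e.card = 3)
    (hB : ¬ HasBergeTriangle H) {s : Finset V} (hs : (shadowGraph H).IsNClique 3 s) : s ∈ H := by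
  obtain ⟨a, b, c, ⟨hab, e₁, he₁, ha₁, hb₁⟩, ⟨hac, e₃, he₃, ha₃, hc₃⟩, ⟨hbc, e₂, he₂, hb₂, hc₂⟩,
    rfl⟩ := is3Clique_iff.1 hs
  have hcover : ∀ e ∈ H, a ∈ e → b ∈ e → c ∈ e → {a, b, c} ∈ H := fun e he ha hb hc ↦ by
    have hsub : {a, b, c} ⊆ e := by simp [insert_subset_iff, *]
    rwa [eq_of_subset_of_card_le hsub (by rw [h3 e he, hs.card_eq])]
  by_cases h12 : e₁ = e₂
  · exact hcover e₁ he₁ ha₁ hb₁ (h12 ▸ hc₂)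
  by_cases h13 : e₁ = e₃
  · exact hcover e₁ he₁ ha₁ hb₁ (h13 ▸ hc₃)
  by_cases h23 : e₂ = e₃
  · exact hcover e₂ he₂ (h23 ▸ ha₃) hb₂ hc₂
  exact (hB ⟨a, b, c, e₁, e₂, e₃, hab, hbc, hac, h12, h23, h13, he₁, he₂, he₃,
    ha₁, hb₁, hb₂, hc₂, hc₃, ha₃⟩).elim

lemma edgeDisjointTriangles_shadowGraph {H : Finset (Finset V)}
    (h3 : ∀ e ∈ H, e.card = 3) (hlin : ∀ e ∈ H, ∀ f ∈ H, e ≠ f → (e ∩ f).card ≤ 1)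
    (hB : ¬ HasBergeTriangle H) : (shadowGraph H).EdgeDisjointTriangles := by
  intro s hs t ht hst x hx y hy
  have hs := mem_of_isNClique_three_shadowGraph h3 hB hs
  have ht := mem_of_isNClique_three_shadowGraph h3 hB ht
  exact card_le_one.1 (hlin s hs t ht hst) x (mem_inter.2 hx) y (mem_inter.2 hy)

/-- Upper-bound half of the Ruzsa–Szemerédi theorem: for every `ε > 0`, every
sufficiently large linear Berge-triangle-free 3-uniform hypergraph on `n` vertices
has at most `ε n²` hyperedges. -/
theorem ruzsa_szemeredi_upper (ε : ℝ) (hε : 0 < ε) :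
    ∃ n₀ : ℕ, ∀ n : ℕ, n₀ < n → ∀ H : Finset (Finset (Fin n)),
      (∀ e ∈ H, e.card = 3) →
      (∀ e ∈ H, ∀ f ∈ H, e ≠ f → (e ∩ f).card ≤ 1) →
      ¬ HasBergeTriangle H →
      (H.card : ℝ) ≤ ε * (n : ℝ) ^ 2 := by
  classical
  refine ⟨⌈(triangleRemovalBound ε)⁻¹⌉₊, fun n hn H h3 hlin hB ↦ ?_⟩
  have hsub : H ⊆ (shadowGraph H).cliqueFinset 3 := fun e he ↦ by
    simpa [h3 e he] using isNClique_shadowGraph_of_mem he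
  have hcard : (triangleRemovalBound ε)⁻¹ < card (Fin n) := by
    simpa using Nat.lt_of_ceil_lt hn
  calc (H.card : ℝ) ≤ #((shadowGraph H).cliqueFinset 3) := mod_cast card_le_card hsub
    _ ≤ ε * card (Fin n) ^ 2 :=
      (edgeDisjointTriangles_shadowGraph h3 hlin hB).card_cliqueFinset_le_mul_sq hε hcard
    _ = ε * (n : ℝ) ^ 2 := by simp
end

section
/- Let k ≥ 2 and ε > 0. There exists n₀ such that for n > n₀·√((6k−8)(3k−2)), every 3-uniform hypergraph H on n vertices with no Berge k-book satisfies: the subhypergraph H₂ of hyperedges containing at least two blue pairs has e(H₂) ≤ ε·n², assuming the Ruzsa–Szemerédi bound ex₃^lin(m, C₃) ≤ ε·m² for m > n₀. -/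
open Finset

namespace Finset

lemma exists_subset_injOn_card_le_mul {α β : Type*} [DecidableEq β] {f : α → β}
    {s : Finset α} {m : ℕ} (hm : ∀ b ∈ s.image f, #{a ∈ s | f a = b} ≤ m) :
    ∃ t ⊆ s, Set.InjOn f t ∧ #s ≤ m * #t := by
  obtain ⟨t, hts, hinj, himg⟩ := exists_subset_injOn_image_eq_of_surjOn (s : Set α) (s.image f)
    (by simpa only [coe_image] using Set.surjOn_image f s)
  refine ⟨t, coe_subset.mp hts, hinj, ?_⟩
  rw [← card_image_of_injOn hinj, himg]
  exact card_le_mul_card_image s m hm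

variable {V : Type*} [DecidableEq V]

lemma eq_triple_of_card_eq_three {e : Finset V} (he : #e = 3) {x y z : V}
    (hx : x ∈ e) (hy : y ∈ e) (hz : z ∈ e) (hxy : x ≠ y) (hxz : x ≠ z) (hyz : y ≠ z) :
    e = {x, y, z} :=
  (eq_of_subset_of_card_le (by simp [insert_subset_iff, hx, hy, hz])
    (by rw [he, card_insert_of_notMem (by simp [hxy, hxz]), card_pair hyz])).symm

lemma exists_eq_triple_of_card_eq_three {e : Finset V} (he : #e = 3) {u v : V}
    (hu : u ∈ e) (hv : v ∈ e) (huv : u ≠ v) :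
    ∃ z, z ∈ e ∧ z ≠ u ∧ z ≠ v ∧ e = {u, v, z} := by
  obtain ⟨z, hz⟩ : (e \ {u, v}).Nonempty := by
    rw [← card_pos, card_sdiff_of_subset (by simp [insert_subset_iff, hu, hv]), card_pair huv, he]
    norm_num
  simp only [mem_sdiff, mem_insert, mem_singleton, not_or] at hz
  exact ⟨z, hz.1, hz.2.1, hz.2.2, eq_triple_of_card_eq_three he hu hv hz.1 huv
    (Ne.symm hz.2.1) (Ne.symm hz.2.2)⟩

lemma card_filter_eq_le_of_mem_erase {s : Finset V} {c : V → Finset V} {w : V} {m : ℕ}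
    (hc : ∀ z ∈ s, w ∈ c z ∧ z ∈ c z ∧ z ≠ w ∧ #(c z) = m + 1) :
    ∀ f ∈ s.image c, #{z ∈ s | c z = f} ≤ m := by
  rintro _ hf
  obtain ⟨z, hz, rfl⟩ := mem_image.mp hf
  obtain ⟨hw, -, -, hcard⟩ := hc z hz
  calc #{y ∈ s | c y = c z} ≤ #((c z).erase w) := card_le_card fun y hy => by
        obtain ⟨hy, hyz⟩ := mem_filter.mp hy
        exact mem_erase.mpr ⟨(hc y hy).2.2.1, hyz ▸ (hc y hy).2.1⟩
    _ = m := by rw [card_erase_of_mem hw, hcard, Nat.add_sub_cancel]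

end Finset

namespace SimpleGraph

variable {V : Type*} [Fintype V] [DecidableEq V] {G : SimpleGraph V} [DecidableRel G.Adj]

lemma card_cliqueFinset_three_le_mul {d : ℕ}
    (hd : ∀ x y, G.Adj x y → #(G.neighborFinset x ∩ G.neighborFinset y) ≤ d) :
    #(G.cliqueFinset 3) ≤ d * Fintype.card V ^ 2 := by
  set edges : Finset (V × V) := {p | G.Adj p.1 p.2}
  have hcover : G.cliqueFinset 3 ⊆ edges.biUnion fun p =>
      (G.neighborFinset p.1 ∩ G.neighborFinset p.2).image fun z => {p.1, p.2, z} := by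
    intro t ht
    obtain ⟨x, y, z, hxy, hxz, hyz, rfl⟩ := is3Clique_iff.mp (mem_cliqueFinset_iff.mp ht)
    simp only [mem_biUnion, mem_image, mem_inter, mem_neighborFinset]
    exact ⟨(x, y), by simpa [edges] using hxy, z, ⟨hxz, hyz⟩, rfl⟩
  calc #(G.cliqueFinset 3) ≤ ∑ p ∈ edges, d := (card_le_card hcover).trans <|
        card_biUnion_le.trans <| sum_le_sum fun p hp =>
          card_image_le.trans (hd _ _ (by simpa [edges] using hp))
    _ ≤ d * Fintype.card V ^ 2 := by
      rw [sum_const, smul_eq_mul, mul_comm, sq, ← Fintype.card_prod]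
      exact Nat.mul_le_mul_left _ (card_le_univ _)

/-- Each triangle of `F` contains an edge missing from `G'`, and each such edge lies in at most
`d` members of `F`. -/
lemma card_le_mul_card_edgeFinset_sdiff {F : Finset (Finset V)} (hF : F ⊆ G.cliqueFinset 3)
    {d : ℕ} (hd : ∀ x y, x ≠ y → #{t ∈ F | x ∈ t ∧ y ∈ t} ≤ d)
    {G' : SimpleGraph V} [DecidableRel G'.Adj] (hfree : G'.CliqueFree 3) :
    #F ≤ d * #(G.edgeFinset \ G'.edgeFinset) := by
  have hlost : ∀ t ∈ F, 1 ≤ #{e ∈ G.edgeFinset \ G'.edgeFinset | e ∈ t.sym2} := by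
    intro t ht
    have htG := mem_cliqueFinset_iff.mp (hF ht)
    obtain ⟨x, hx, y, hy, hxy, hG'xy⟩ : ∃ x ∈ t, ∃ y ∈ t, x ≠ y ∧ ¬ G'.Adj x y := by
      by_contra! h
      exact hfree t ⟨fun x hx y hy hxy => h x hx y hy hxy, htG.card_eq⟩
    exact one_le_card.mpr ⟨s(x, y), mem_filter.mpr
      ⟨by simp [htG.isClique hx hy hxy, hG'xy], mk_mem_sym2_iff.mpr ⟨hx, hy⟩⟩⟩
  have hcharged : ∀ e ∈ G.edgeFinset \ G'.edgeFinset, #{t ∈ F | e ∈ t.sym2} ≤ d := by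
    intro e he
    induction e using Sym2.ind with
    | h x y =>
      simpa only [mk_mem_sym2_iff] using
        hd x y (G.ne_of_adj (mem_edgeFinset.mp (mem_sdiff.mp he).1))
  simpa [mul_comm] using card_mul_le_card_mul (fun (t : Finset V) e => e ∈ t.sym2) hlost hcharged

lemma card_le_of_card_cliqueFinset_lt {F : Finset (Finset V)} (hF : F ⊆ G.cliqueFinset 3)
    {d : ℕ} (hd : ∀ x y, x ≠ y → #{t ∈ F | x ∈ t ∧ y ∈ t} ≤ d) {ε : ℝ}
    (hG : #(G.cliqueFinset 3) < triangleRemovalBound ε * Fintype.card V ^ 3) :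
    (#F : ℝ) ≤ d * (ε * Fintype.card V ^ 2) := by
  obtain ⟨G', hG', _, hcut, hfree⟩ := triangle_removal hG
  have hsub : G'.edgeFinset ⊆ G.edgeFinset := edgeFinset_subset_edgeFinset.mpr hG'
  have hcharge := card_le_mul_card_edgeFinset_sdiff hF hd hfree
  rw [card_sdiff_of_subset hsub] at hcharge
  calc (#F : ℝ) ≤ d * ((#G.edgeFinset - #G'.edgeFinset : ℕ) : ℝ) := by exact_mod_cast hcharge
    _ ≤ d * (ε * Fintype.card V ^ 2) := by
      rw [Nat.cast_sub (card_le_card hsub)]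
      push_cast at hcut
      gcongr

end SimpleGraph

def primalGraph {V : Type*} (F : Finset (Finset V)) : SimpleGraph V where
  Adj x y := x ≠ y ∧ ∃ e ∈ F, x ∈ e ∧ y ∈ e
  symm := ⟨fun _ _ ⟨hne, e, he, hx, hy⟩ => ⟨hne.symm, e, he, hy, hx⟩⟩
  loopless := ⟨fun _ h => h.1 rfl⟩

instance {V : Type*} [DecidableEq V] (F : Finset (Finset V)) :
    DecidableRel (primalGraph F).Adj :=
  fun x y => inferInstanceAs (Decidable (x ≠ y ∧ ∃ e ∈ F, x ∈ e ∧ y ∈ e))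

lemma mem_cliqueFinset_primalGraph {V : Type*} [Fintype V] [DecidableEq V]
    {F : Finset (Finset V)} {e : Finset V} (he : e ∈ F) (he3 : #e = 3) :
    e ∈ (primalGraph F).cliqueFinset 3 :=
  SimpleGraph.mem_cliqueFinset_iff.mpr ⟨fun _ hx _ hy hxy => ⟨hxy, e, he, hx, hy⟩, he3⟩

lemma hasBergeBook_of_finset {V : Type*} {H : Finset (Finset V)} {k : ℕ} {u v : V}
    (huv : u ≠ v) {e₀ : Finset V} (he₀ : e₀ ∈ H) (hu : u ∈ e₀) (hv : v ∈ e₀)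
    {s : Finset V} (hs : k ≤ #s) {a b : V → Finset V}
    (hsuv : ∀ z ∈ s, z ≠ u ∧ z ≠ v)
    (hpages : ∀ z ∈ s, a z ∈ H ∧ b z ∈ H ∧ u ∈ a z ∧ z ∈ a z ∧ v ∈ b z ∧ z ∈ b z)
    (ha : Set.InjOn a s) (hb : Set.InjOn b s) (hab : ∀ z ∈ s, ∀ w ∈ s, a z ≠ b w)
    (he₀ab : ∀ z ∈ s, e₀ ≠ a z ∧ e₀ ≠ b z) :
    HasBergeBook H k := by
  let x : Fin k → V := fun i => s.equivFin.symm (Fin.castLE hs i)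
  have hxs : ∀ i, x i ∈ s := fun i => (s.equivFin.symm _).2
  have hx : x.Injective := fun i j h =>
    Fin.castLE_injective hs (s.equivFin.symm.injective (Subtype.ext h))
  exact ⟨u, v, x, e₀, a ∘ x, b ∘ x, huv, hx, fun i => hsuv _ (hxs i), he₀, hu, hv,
    fun i => hpages _ (hxs i), fun i j h => hx (ha (hxs i) (hxs j) h),
    fun i j h => hx (hb (hxs i) (hxs j) h), fun i j => hab _ (hxs i) _ (hxs j),
    fun i => he₀ab _ (hxs i)⟩

section Hypergraph

variable {V : Type*} [DecidableEq V] {H : Finset (Finset V)}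

/-- The hypergraph `H₂`. -/
def twoBlueEdges (H : Finset (Finset V)) : Finset (Finset V) :=
  H.filter (fun e => 2 ≤ ((e.powersetCard 2).filter (fun p => BluePair H p)).card)

lemma twoBlueEdges_subset : twoBlueEdges H ⊆ H := filter_subset _ _

lemma BluePair.exists_ne {p e : Finset V} (hp : BluePair H p) :
    ∃ w ∈ H, p ⊆ w ∧ w ≠ e := by
  obtain ⟨w, hw, hwe⟩ := exists_mem_ne hp e
  exact ⟨w, (mem_filter.mp hw).1, (mem_filter.mp hw).2, hwe⟩

def bergeApexes [Fintype V] (H : Finset (Finset V)) (u v : V) : Finset V :=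
  {z | z ≠ u ∧ z ≠ v ∧ ∃ a ∈ H, ∃ b ∈ H, a ≠ b ∧ u ∈ a ∧ z ∈ a ∧ v ∈ b ∧ z ∈ b}

variable [Fintype V]

/-- Two of the three pairs of `e` are blue, so `x z` or `y z` is, and the second edge through it
together with `e` makes `z` an apex of `x y`. -/
lemma mem_bergeApexes_of_mem_twoBlueEdges {e : Finset V} (he : e ∈ twoBlueEdges H)
    (he3 : #e = 3) {x y z : V} (hx : x ∈ e) (hy : y ∈ e) (hz : z ∈ e)
    (hxy : x ≠ y) (hxz : x ≠ z) (hyz : y ≠ z) :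
    z ∈ bergeApexes H x y := by
  obtain ⟨heH, hblue⟩ := mem_filter.mp he
  have hxze : {x, z} ⊆ e := by simp [insert_subset_iff, hx, hz]
  have hyze : {y, z} ⊆ e := by simp [insert_subset_iff, hy, hz]
  have hblue' : BluePair H {x, z} ∨ BluePair H {y, z} := by
    by_contra! h
    have hsub : (e.powersetCard 2).filter (fun p => BluePair H p) ⊆
        e.powersetCard 2 \ {{x, z}, {y, z}} := fun p hp => by
      obtain ⟨hp, hpb⟩ := mem_filter.mp hp
      simp only [mem_sdiff, mem_insert, mem_singleton, not_or]
      exact ⟨hp, fun h' => h.1 (h' ▸ hpb), fun h' => h.2 (h' ▸ hpb)⟩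
    have hpairs : {{x, z}, {y, z}} ⊆ e.powersetCard 2 := by
      simp [insert_subset_iff, mem_powersetCard, hxze, hyze, card_pair hxz, card_pair hyz]
    have hne : ({x, z} : Finset V) ≠ {y, z} := fun h' => by
      have hx' : x ∈ ({y, z} : Finset V) := h' ▸ mem_insert_self x {z}
      simp [hxy, hxz] at hx'
    have := card_le_card hsub
    rw [card_sdiff_of_subset hpairs, card_powersetCard, he3, card_pair hne,
      show Nat.choose 3 2 = 3 from rfl] at this
    omega
  simp only [bergeApexes, mem_filter, mem_univ, true_and]
  refine ⟨hxz.symm, hyz.symm, ?_⟩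
  rcases hblue' with hb | hb
  · obtain ⟨w, hw, hxzw, hwe⟩ := hb.exists_ne
    exact ⟨w, hw, e, heH, hwe, hxzw (by simp), hxzw (by simp), hy, hz⟩
  · obtain ⟨w, hw, hyzw, hwe⟩ := hb.exists_ne
    exact ⟨e, heH, w, hw, hwe.symm, hx, hz, hyzw (by simp), hyzw (by simp)⟩

/-- Halving twice, once to make the edges through `u` distinct and once for those through `v`,
turns `4k` apexes off `e₀` into the `k` pages of a Berge book. -/
lemma card_bergeApexes_sdiff_lt {k : ℕ} (h3 : ∀ e ∈ H, #e = 3) (hbook : ¬ HasBergeBook H k)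
    {u v : V} (huv : u ≠ v) {e₀ : Finset V} (he₀ : e₀ ∈ H) (hu : u ∈ e₀) (hv : v ∈ e₀) :
    #(bergeApexes H u v \ e₀) < 4 * k := by
  by_contra! hs
  set s := bergeApexes H u v \ e₀
  have hapex : ∀ z ∈ s, z ∉ e₀ ∧ z ≠ u ∧ z ≠ v ∧ ∃ a ∈ H, ∃ b ∈ H,
      a ≠ b ∧ u ∈ a ∧ z ∈ a ∧ v ∈ b ∧ z ∈ b := fun z hz => by
    simp only [s, bergeApexes, mem_sdiff, mem_filter, mem_univ, true_and] at hz
    exact ⟨hz.2, hz.1⟩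
  choose! hze₀ hzu hzv a ha b hb hab hua hza hvb hzb using hapex
  obtain ⟨t, hts, hta, hst⟩ := exists_subset_injOn_card_le_mul (f := a) (m := 2)
    (card_filter_eq_le_of_mem_erase fun z hz => ⟨hua z hz, hza z hz, hzu z hz, h3 _ (ha z hz)⟩)
  obtain ⟨r, hrt, hrb, htr⟩ := exists_subset_injOn_card_le_mul (f := b) (m := 2)
    (card_filter_eq_le_of_mem_erase fun z hz =>
      ⟨hvb z (hts hz), hzb z (hts hz), hzv z (hts hz), h3 _ (hb z (hts hz))⟩)
  have hrs : r ⊆ s := hrt.trans hts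
  refine hbook (hasBergeBook_of_finset huv he₀ hu hv (s := r) (by omega)
    (fun z hz => ⟨hzu z (hrs hz), hzv z (hrs hz)⟩)
    (fun z hz => ⟨ha z (hrs hz), hb z (hrs hz), hua z (hrs hz), hza z (hrs hz),
      hvb z (hrs hz), hzb z (hrs hz)⟩)
    (hta.mono (coe_subset.mpr hrt)) hrb (fun z hz w hw habzw => ?_)
    (fun z hz => ⟨fun h => hze₀ z (hrs hz) (h ▸ hza z (hrs hz)),
      fun h => hze₀ z (hrs hz) (h ▸ hzb z (hrs hz))⟩))
  obtain rfl | hzw := eq_or_ne z w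
  · exact hab z (hrs hz) habzw
  · have htriple := eq_triple_of_card_eq_three (h3 _ (ha z (hrs hz))) (hua z (hrs hz))
      (habzw ▸ hvb w (hrs hw)) (hza z (hrs hz)) huv (hzu z (hrs hz)).symm (hzv z (hrs hz)).symm
    have hwa := habzw ▸ hzb w (hrs hw)
    simp [htriple, hzu w (hrs hw), hzv w (hrs hw), hzw.symm] at hwa

lemma card_bergeApexes_le {k : ℕ} (h3 : ∀ e ∈ H, #e = 3) (hbook : ¬ HasBergeBook H k)
    {u v : V} (huv : u ≠ v) {e₀ : Finset V} (he₀ : e₀ ∈ H) (hu : u ∈ e₀) (hv : v ∈ e₀) :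
    #(bergeApexes H u v) ≤ 4 * k := by
  have hthird : bergeApexes H u v ∩ e₀ ⊆ (e₀.erase u).erase v := fun z hz => by
    simp only [bergeApexes, mem_inter, mem_filter, mem_univ, true_and] at hz
    exact mem_erase.mpr ⟨hz.1.2.1, mem_erase.mpr ⟨hz.1.1, hz.2⟩⟩
  have hcard := card_le_card hthird
  rw [card_erase_of_mem (mem_erase.mpr ⟨huv.symm, hv⟩), card_erase_of_mem hu, h3 e₀ he₀] at hcard
  have := card_sdiff_add_card_inter (bergeApexes H u v) e₀
  have := card_bergeApexes_sdiff_lt h3 hbook huv he₀ hu hv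
  omega

lemma card_filter_twoBlueEdges_le {k : ℕ} (h3 : ∀ e ∈ H, #e = 3) (hbook : ¬ HasBergeBook H k)
    {u v : V} (huv : u ≠ v) :
    #{e ∈ twoBlueEdges H | u ∈ e ∧ v ∈ e} ≤ 4 * k := by
  rcases eq_empty_or_nonempty {e ∈ twoBlueEdges H | u ∈ e ∧ v ∈ e} with h | ⟨e₀, he₀⟩
  · simp [h]
  obtain ⟨he₀H, hu, hv⟩ := mem_filter.mp he₀
  calc #{e ∈ twoBlueEdges H | u ∈ e ∧ v ∈ e}
      ≤ #((bergeApexes H u v).image fun z => {u, v, z}) := card_le_card fun e he => by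
        obtain ⟨he, hue, hve⟩ := mem_filter.mp he
        have he3 := h3 e (twoBlueEdges_subset he)
        obtain ⟨z, hz, hzu, hzv, rfl⟩ := exists_eq_triple_of_card_eq_three he3 hue hve huv
        exact mem_image_of_mem _ (mem_bergeApexes_of_mem_twoBlueEdges he he3 hue hve hz huv
          hzu.symm hzv.symm)
    _ ≤ #(bergeApexes H u v) := card_image_le
    _ ≤ 4 * k := card_bergeApexes_le h3 hbook huv (twoBlueEdges_subset he₀H) hu hv

lemma inter_neighborFinset_primalGraph_subset (h3 : ∀ e ∈ H, #e = 3) {x y : V} (hxy : x ≠ y) :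
    (primalGraph (twoBlueEdges H)).neighborFinset x ∩
      (primalGraph (twoBlueEdges H)).neighborFinset y ⊆ bergeApexes H x y := by
  intro z hz
  simp only [mem_inter, SimpleGraph.mem_neighborFinset] at hz
  obtain ⟨⟨hxz, a, ha, hxa, hza⟩, ⟨hyz, b, hb, hyb, hzb⟩⟩ := hz
  obtain rfl | hab := eq_or_ne a b
  · exact mem_bergeApexes_of_mem_twoBlueEdges ha (h3 a (twoBlueEdges_subset ha)) hxa hyb hza
      hxy hxz hyz
  · simp only [bergeApexes, mem_filter, mem_univ, true_and]
    exact ⟨hxz.symm, hyz.symm, a, twoBlueEdges_subset ha, b, twoBlueEdges_subset hb, hab,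
      hxa, hza, hyb, hzb⟩

lemma card_cliqueFinset_primalGraph_twoBlueEdges_le {k : ℕ} (h3 : ∀ e ∈ H, #e = 3)
    (hbook : ¬ HasBergeBook H k) :
    #((primalGraph (twoBlueEdges H)).cliqueFinset 3) ≤ 4 * k * Fintype.card V ^ 2 :=
  SimpleGraph.card_cliqueFinset_three_le_mul fun _ _ ⟨hxy, _, he, hx, hy⟩ =>
    (card_le_card (inter_neighborFinset_primalGraph_subset h3 hxy)).trans
      (card_bergeApexes_le h3 hbook hxy (twoBlueEdges_subset he) hx hy)

end Hypergraph

/-- For `k ≥ 2`, `ε > 0` there is `n₀` such that, assuming the Ruzsa–Szemerédi bound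
`ex₃^lin(m, C₃) ≤ ε m²` for `m > n₀`, every 3-uniform Berge-`k`-book-free hypergraph
on `n > n₀·√((6k−8)(3k−2))` vertices satisfies `e(H₂) ≤ ε n²`, where `H₂` consists of
the hyperedges with at least two blue pairs. -/
theorem H2_bound (k : ℕ) (hk : 2 ≤ k) (ε : ℝ) (hε : 0 < ε) :
    ∃ n₀ : ℕ,
      (∀ m : ℕ, n₀ < m → ∀ H' : Finset (Finset (Fin m)),
        (∀ e ∈ H', e.card = 3) →
        (∀ e ∈ H', ∀ f ∈ H', e ≠ f → (e ∩ f).card ≤ 1) →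
        ¬ HasBergeTriangle H' → (H'.card : ℝ) ≤ ε * (m : ℝ) ^ 2) →
      ∀ n : ℕ, (n : ℝ) > (n₀ : ℝ) * Real.sqrt ((6 * (k : ℝ) - 8) * (3 * (k : ℝ) - 2)) →
        ∀ H : Finset (Finset (Fin n)), (∀ e ∈ H, e.card = 3) →
          ¬ HasBergeBook H k →
          (((H.filter (fun e =>
              2 ≤ ((e.powersetCard 2).filter (fun p => BluePair H p)).card)).card : ℝ))
            ≤ ε * (n : ℝ) ^ 2 := by
  have hk4 : (0 : ℝ) < 4 * k := by positivity
  set B := SimpleGraph.triangleRemovalBound (ε / (4 * k))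
  have hB : 0 < B := SimpleGraph.triangleRemovalBound_pos (by positivity)
  refine ⟨⌈4 * k / B⌉₊, fun _ n hn H h3 hbook => ?_⟩
  have hsqrt : 1 ≤ √((6 * (k : ℝ) - 8) * (3 * (k : ℝ) - 2)) := by
    have : (2 : ℝ) ≤ k := by exact_mod_cast hk
    exact Real.one_le_sqrt.mpr (by nlinarith)
  have hn₀ : 4 * k / B < n := (Nat.le_ceil _).trans_lt <|
    (le_mul_of_one_le_right (Nat.cast_nonneg _) hsqrt).trans_lt hn
  have hBn : 4 * k < B * n := by rw [div_lt_iff₀ hB] at hn₀; linarith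
  have hnpos : (0 : ℝ) < n := (div_pos hk4 hB).trans hn₀
  have htriangles : (#((primalGraph (twoBlueEdges H)).cliqueFinset 3) : ℝ) < B * n ^ 3 :=
    calc (#((primalGraph (twoBlueEdges H)).cliqueFinset 3) : ℝ) ≤ 4 * k * n ^ 2 := by
          exact_mod_cast (card_cliqueFinset_primalGraph_twoBlueEdges_le h3 hbook).trans_eq
            (by rw [Fintype.card_fin])
      _ < B * n ^ 3 := by
        have : B * n ^ 3 = B * n * n ^ 2 := by ring
        rw [this]
        gcongr
  have hcount := SimpleGraph.card_le_of_card_cliqueFinset_lt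
    (fun e he => mem_cliqueFinset_primalGraph he (h3 e (twoBlueEdges_subset he)))
    (fun x y hxy => card_filter_twoBlueEdges_le h3 hbook hxy)
    (by simpa only [Fintype.card_fin] using htriangles)
  calc (#(twoBlueEdges H) : ℝ) ≤ (4 * k : ℕ) * (ε / (4 * k) * n ^ 2) := by
        simpa only [Fintype.card_fin] using hcount
    _ = ε * n ^ 2 := by push_cast; field_simp
end
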